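/- arXiv:2211.16728 — 4 statements merged into one kernel-verified Lean document; each statement's English description precedes it below -/
import Mathlib

section
/- Let G be a connected graph and L a degree-assignment for G (i.e., |L(v)| ≥ deg(v) for every vertex v). If there exists a vertex x with |L(x)| > deg(x), then G admits an L-coloring. -/
open scoped Classical

open Finset

private lemma aux_greedy {V : Type*} [Fintype V] [DecidableEq V] (G : SimpleGraph V)
    [DecidableRel G.Adj] (x : V) :
    ∀ n (A : Finset V), A.card ≤ n → x ∈ A →
      (∀ u ∈ A, u ≠ x → ∃ w ∈ A, G.Adj u w ∧ G.dist x w < G.dist x u) →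
      ∀ L' : V → Finset ℕ,
        (∀ u ∈ A, u ≠ x → (G.neighborFinset u ∩ A).card ≤ (L' u).card) →
        (G.neighborFinset x ∩ A).card < (L' x).card →
        ∃ φ : V → ℕ, (∀ v ∈ A, φ v ∈ L' v) ∧
          ∀ u ∈ A, ∀ v ∈ A, G.Adj u v → φ u ≠ φ v := by
  intro n
  induction n with
  | zero =>
    intro A hcard hxA _ _ _ _
    have : A = ∅ := Finset.card_eq_zero.mp (Nat.le_zero.mp hcard)
    simp [this] at hxA
  | succ n ih =>
    intro A hcard hxA hinv L' hcount hxcount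
    by_cases hsingle : ∀ u ∈ A, u = x
    · -- A = {x}
      have hne : (L' x).Nonempty := Finset.card_pos.mp (Nat.lt_of_le_of_lt (Nat.zero_le _) hxcount)
      obtain ⟨c, hc⟩ := hne
      refine ⟨fun _ => c, fun v hv => by rwa [hsingle v hv], ?_⟩
      intro u hu v hv hadj
      rw [hsingle u hu, hsingle v hv] at hadj
      exact absurd hadj (G.irrefl)
    · push_neg at hsingle
      obtain ⟨u0, hu0A, hu0x⟩ := hsingle
      -- pick v in A maximizing dist x
      obtain ⟨v, hvA, hvmax⟩ := Finset.exists_max_image A (fun u => G.dist x u) ⟨u0, hu0A⟩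
      have hvx : v ≠ x := by
        rintro rfl
        obtain ⟨w, hwA, _, hwlt⟩ := hinv u0 hu0A hu0x
        have h1 := hvmax u0 hu0A
        have h2 := hvmax w hwA
        have h0 : G.dist v v = 0 := SimpleGraph.dist_self
        omega
      -- v has a neighbor in A, so L' v is nonempty
      obtain ⟨w0, hw0A, hw0adj, _⟩ := hinv v hvA hvx
      have hw0mem : w0 ∈ G.neighborFinset v ∩ A := by
        simp [SimpleGraph.mem_neighborFinset, hw0adj, hw0A]
      have hLvne : (L' v).Nonempty := by
        have h1 : 1 ≤ (G.neighborFinset v ∩ A).card := Finset.card_pos.mpr ⟨w0, hw0mem⟩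
        exact Finset.card_pos.mp (lt_of_lt_of_le (by omega) (hcount v hvA hvx))
      obtain ⟨c, hc⟩ := hLvne
      set A' := A.erase v with hA'
      set L'' : V → Finset ℕ := fun u => if G.Adj v u then (L' u).erase c else L' u with hL''
      have hA'card : A'.card ≤ n := by
        rw [hA', Finset.card_erase_of_mem hvA]
        omega
      have hxA' : x ∈ A' := Finset.mem_erase.mpr ⟨Ne.symm hvx, hxA⟩
      have hinv' : ∀ u ∈ A', u ≠ x → ∃ w ∈ A', G.Adj u w ∧ G.dist x w < G.dist x u := by
        intro u huA' hux
        obtain ⟨w, hwA, hadj, hlt⟩ := hinv u (Finset.mem_of_mem_erase huA') hux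
        refine ⟨w, Finset.mem_erase.mpr ⟨?_, hwA⟩, hadj, hlt⟩
        rintro rfl
        have := hvmax u (Finset.mem_of_mem_erase huA')
        omega
      have hinter : ∀ u, G.neighborFinset u ∩ A' = (G.neighborFinset u ∩ A).erase v := by
        intro u
        ext y
        simp only [Finset.mem_inter, Finset.mem_erase, hA']
        tauto
      have hcount' : ∀ u ∈ A', u ≠ x → (G.neighborFinset u ∩ A').card ≤ (L'' u).card := by
        intro u huA' hux
        have hbase := hcount u (Finset.mem_of_mem_erase huA') hux
        rw [hinter]
        by_cases hadj : G.Adj v u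
        · have hvmem : v ∈ G.neighborFinset u ∩ A := by
            simp [SimpleGraph.mem_neighborFinset, hadj.symm, hvA]
          rw [Finset.card_erase_of_mem hvmem]
          simp only [hL'', if_pos hadj]
          have := Finset.pred_card_le_card_erase (s := L' u) (a := c)
          omega
        · have hnmem : v ∉ G.neighborFinset u := by
            simp [SimpleGraph.mem_neighborFinset]
            exact fun h => hadj h.symm
          rw [Finset.erase_eq_of_notMem (fun h => hnmem (Finset.mem_inter.mp h).1)]
          simp only [hL'', if_neg hadj]
          exact hbase
      have hxcount' : (G.neighborFinset x ∩ A').card < (L'' x).card := by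
        rw [hinter]
        by_cases hadj : G.Adj v x
        · have hvmem : v ∈ G.neighborFinset x ∩ A := by
            simp [SimpleGraph.mem_neighborFinset, hadj.symm, hvA]
          rw [Finset.card_erase_of_mem hvmem]
          simp only [hL'', if_pos hadj]
          have h1 := Finset.pred_card_le_card_erase (s := L' x) (a := c)
          have h2 := Finset.card_pos.mpr ⟨v, hvmem⟩
          omega
        · have hnmem : v ∉ G.neighborFinset x := by
            simp [SimpleGraph.mem_neighborFinset]
            exact fun h => hadj h.symm
          rw [Finset.erase_eq_of_notMem (fun h => hnmem (Finset.mem_inter.mp h).1)]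
          simp only [hL'', if_neg hadj]
          exact hxcount
      obtain ⟨φ, hφmem, hφprop⟩ := ih A' hA'card hxA' hinv' L'' hcount' hxcount'
      refine ⟨Function.update φ v c, ?_, ?_⟩
      · intro u huA
        by_cases huv : u = v
        · subst huv; simpa using hc
        · rw [Function.update_of_ne huv]
          have huA' : u ∈ A' := Finset.mem_erase.mpr ⟨huv, huA⟩
          have := hφmem u huA'
          by_cases hadj : G.Adj v u
          · simp only [hL'', if_pos hadj] at this
            exact Finset.mem_of_mem_erase this
          · simpa [hL'', if_neg hadj] using this
      · intro a haA b hbA hadj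
        by_cases hav : a = v <;> by_cases hbv : b = v
        · subst hav; subst hbv; exact absurd hadj (G.irrefl)
        · subst hav
          rw [Function.update_self, Function.update_of_ne hbv]
          have hbA' : b ∈ A' := Finset.mem_erase.mpr ⟨hbv, hbA⟩
          have := hφmem b hbA'
          simp only [hL'', if_pos hadj] at this
          exact fun h => (Finset.ne_of_mem_erase this) h.symm
        · subst hbv
          rw [Function.update_self, Function.update_of_ne hav]
          have haA' : a ∈ A' := Finset.mem_erase.mpr ⟨hav, haA⟩
          have := hφmem a haA'
          simp only [hL'', if_pos hadj.symm] at this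
          exact Finset.ne_of_mem_erase this
        · rw [Function.update_of_ne hav, Function.update_of_ne hbv]
          exact hφprop a (Finset.mem_erase.mpr ⟨hav, haA⟩) b (Finset.mem_erase.mpr ⟨hbv, hbA⟩) hadj

/-- If G is connected, L is a degree-assignment, and some vertex x has
|L(x)| > deg(x), then G admits an L-coloring. -/
theorem stmt_0 {V : Type*} [Fintype V] [DecidableEq V] (G : SimpleGraph V)
    [DecidableRel G.Adj] (hconn : G.Connected) (L : V → Finset ℕ)
    (hdeg : ∀ v, G.degree v ≤ (L v).card)
    (x : V) (hx : G.degree x < (L x).card) :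
    ∃ φ : V → ℕ, (∀ v, φ v ∈ L v) ∧ ∀ u v, G.Adj u v → φ u ≠ φ v := by
  have hinv : ∀ u ∈ (Finset.univ : Finset V), u ≠ x →
      ∃ w ∈ (Finset.univ : Finset V), G.Adj u w ∧ G.dist x w < G.dist x u := by
    intro u _ hux
    have hreach : G.Reachable u x := hconn u x
    obtain ⟨p, hp⟩ := hreach.exists_walk_length_eq_dist
    cases p with
    | nil => exact absurd rfl hux
    | cons h q =>
      rename_i w
      refine ⟨w, Finset.mem_univ w, h, ?_⟩
      have h1 : G.dist x w ≤ q.length := by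
        rw [SimpleGraph.dist_comm]
        exact SimpleGraph.dist_le q
      have h2 : G.dist x u = q.length + 1 := by
        rw [SimpleGraph.dist_comm, ← hp, SimpleGraph.Walk.length_cons]
      omega
  have hsimp : ∀ u : V, (G.neighborFinset u ∩ Finset.univ).card = G.degree u := by
    intro u
    rw [Finset.inter_univ, SimpleGraph.card_neighborFinset_eq_degree]
  obtain ⟨φ, h1, h2⟩ := aux_greedy G x (Fintype.card V) Finset.univ (le_refl _)
    (Finset.mem_univ x) hinv L
    (fun u _ _ => by rw [hsimp]; exact hdeg u)
    (by rw [hsimp]; exact hx)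
  exact ⟨φ, fun v => h1 v (Finset.mem_univ v), fun u v hadj =>
    h2 u (Finset.mem_univ u) v (Finset.mem_univ v) hadj⟩
end

section
/- Let G be a connected graph, L a degree-assignment for G, and r a vertex with |L(r)| > deg(r). Ordering the vertices of G by decreasing distance from r and coloring greedily from the lists yields an L-coloring of G; i.e., G is L-colorable. -/
open scoped Classical

section Greedy

variable {V : Type*} [Fintype V] [DecidableEq V] (G : SimpleGraph V)
    [DecidableRel G.Adj]

/-- If `v ≠ r` and `G` is connected, `v` has a neighbor closer to `r`. -/
lemma exists_adj_dist_lt (hconn : G.Connected) (r v : V) (hv : v ≠ r) :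
    ∃ w, G.Adj v w ∧ G.dist r w < G.dist r v := by
  obtain ⟨p, hp⟩ := (hconn v r).exists_walk_length_eq_dist
  cases p with
  | nil => exact absurd rfl hv
  | cons h q =>
    rename_i w
    refine ⟨w, h, ?_⟩
    have h1 : G.dist r w ≤ q.length := by
      simpa using SimpleGraph.dist_le q.reverse
    have h2 : G.dist r v = q.length + 1 := by
      rw [SimpleGraph.dist_comm, ← hp, SimpleGraph.Walk.length_cons]
    omega

/-- Distance from `r`. -/
noncomputable def dd (r v : V) : ℕ := G.dist r v

/-- Maximum distance. -/
noncomputable def DD (r : V) : ℕ := Finset.univ.sup (dd G r)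

/-- A measure: smaller means colored earlier (larger distance from `r`). -/
noncomputable def mm (r v : V) : ℕ :=
  Fintype.card V * (DD G r - dd G r v) + (Fintype.equivFin V v : ℕ)

lemma mm_lt_of_dist_lt (r : V) {u v : V} (h : dd G r u < dd G r v) :
    mm G r v < mm G r u := by
  have hu : dd G r u ≤ DD G r := Finset.le_sup (Finset.mem_univ u)
  have hv : dd G r v ≤ DD G r := Finset.le_sup (Finset.mem_univ v)
  have hidx : (Fintype.equivFin V v : ℕ) < Fintype.card V :=
    (Fintype.equivFin V v).isLt
  have : DD G r - dd G r v + 1 ≤ DD G r - dd G r u := by omega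
  calc mm G r v < Fintype.card V * (DD G r - dd G r v + 1) := by
        unfold mm; ring_nf; omega
    _ ≤ Fintype.card V * (DD G r - dd G r u) := by
        exact Nat.mul_le_mul_left _ this
    _ ≤ mm G r u := Nat.le_add_right _ _

lemma mm_injective (r : V) : Function.Injective (mm G r) := by
  intro u v h
  by_cases hd : dd G r u = dd G r v
  · have : (Fintype.equivFin V u : ℕ) = (Fintype.equivFin V v : ℕ) := by
      unfold mm at h; rw [hd] at h; omega
    exact (Fintype.equivFin V).injective (Fin.ext this)
  · rcases Nat.lt_or_ge (dd G r u) (dd G r v) with h' | h'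
    · exact absurd h (Nat.ne_of_lt (mm_lt_of_dist_lt G r h')).symm
    · have h'' : dd G r v < dd G r u := lt_of_le_of_ne h' (Ne.symm hd)
      exact absurd h (Nat.ne_of_lt (mm_lt_of_dist_lt G r h''))

/-- The set of already-colored neighbors of `v`. -/
noncomputable def earlier (r : V) (v : V) : Finset V :=
  Finset.univ.filter (fun u => G.Adj u v ∧ mm G r u < mm G r v)

lemma mem_earlier {r v u : V} :
    u ∈ earlier G r v ↔ G.Adj u v ∧ mm G r u < mm G r v := by
  simp [earlier]

/-- The greedy coloring: each vertex takes the minimum color of its list not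
used by already-colored (earlier-in-`mm`) neighbors. -/
noncomputable def greedy (r : V) (L : V → Finset ℕ) (v : V) : ℕ :=
  let F := (earlier G r v).attach.image (fun u => greedy r L u.1)
  if h : ((L v) \ F).Nonempty then ((L v) \ F).min' h else 0
termination_by mm G r v
decreasing_by exact (mem_earlier G |>.mp u.2).2

set_option maxHeartbeats 2000000 in
lemma greedy_def (r : V) (L : V → Finset ℕ) (v : V) :
    greedy G r L v =
      if h : ((L v) \ (earlier G r v).attach.image
          (fun u => greedy G r L u.1)).Nonempty
      then ((L v) \ (earlier G r v).attach.image
          (fun u => greedy G r L u.1)).min' h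
      else 0 := by
  rw [greedy]

lemma greedy_nonempty (r : V) (L : V → Finset ℕ) (hconn : G.Connected)
    (hdeg : ∀ v, G.degree v ≤ (L v).card) (hr : G.degree r < (L r).card)
    (v : V) :
    ((L v) \ (earlier G r v).attach.image
      (fun u => greedy G r L u.1)).Nonempty := by
  classical
  have hEsub : earlier G r v ⊆ G.neighborFinset v := by
    intro u hu
    rw [SimpleGraph.mem_neighborFinset]
    exact ((mem_earlier G).mp hu).1.symm
  have hcard : (earlier G r v).card < (L v).card := by
    by_cases hv : v = r
    · calc (earlier G r v).card ≤ G.degree v := by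
            rw [← SimpleGraph.card_neighborFinset_eq_degree]
            exact Finset.card_le_card hEsub
        _ < (L v).card := hv ▸ hr
    · obtain ⟨w, hadj, hdw⟩ := exists_adj_dist_lt G hconn r v hv
      have hwmem : w ∈ G.neighborFinset v := by
        rw [SimpleGraph.mem_neighborFinset]; exact hadj
      have hwnot : w ∉ earlier G r v := by
        rw [mem_earlier]
        push_neg
        intro _
        exact le_of_lt (mm_lt_of_dist_lt G r hdw)
      have hss : earlier G r v ⊂ G.neighborFinset v :=
        ⟨hEsub, fun h => hwnot (h hwmem)⟩
      calc (earlier G r v).card < (G.neighborFinset v).card :=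
            Finset.card_lt_card hss
        _ = G.degree v := SimpleGraph.card_neighborFinset_eq_degree G v
        _ ≤ (L v).card := hdeg v
  have himg : ((earlier G r v).attach.image
      (fun u => greedy G r L u.1)).card < (L v).card := by
    calc ((earlier G r v).attach.image (fun u => greedy G r L u.1)).card
        ≤ (earlier G r v).attach.card := Finset.card_image_le
      _ = (earlier G r v).card := Finset.card_attach
      _ < (L v).card := hcard
  rw [← Finset.card_pos]
  have := Finset.le_card_sdiff ((earlier G r v).attach.image
    (fun u => greedy G r L u.1)) (L v)
  omega

end Greedy

/-- If G is connected, L is a degree-assignment, and r is a vertex with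
|L(r)| > deg(r), then the greedy procedure yields an L-coloring, i.e.
G is L-colorable. -/
theorem stmt_1 {V : Type*} [Fintype V] [DecidableEq V] (G : SimpleGraph V)
    [DecidableRel G.Adj] (hconn : G.Connected) (L : V → Finset ℕ)
    (hdeg : ∀ v, G.degree v ≤ (L v).card)
    (r : V) (hr : G.degree r < (L r).card) :
    ∃ φ : V → ℕ, (∀ v, φ v ∈ L v) ∧ ∀ u v, G.Adj u v → φ u ≠ φ v := by
  classical
  refine ⟨greedy G r L, ?_, ?_⟩
  · intro v
    have hne := greedy_nonempty G r L hconn hdeg hr v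
    rw [greedy_def G r L v, dif_pos hne]
    exact (Finset.mem_sdiff.mp (Finset.min'_mem _ hne)).1
  · have key : ∀ u v, G.Adj u v → mm G r u < mm G r v →
        greedy G r L u ≠ greedy G r L v := by
      intro u v hadj hm
      have hne := greedy_nonempty G r L hconn hdeg hr v
      have hmem := Finset.min'_mem _ hne
      rw [Finset.mem_sdiff] at hmem
      rw [greedy_def G r L v, dif_pos hne]
      intro h
      apply hmem.2
      apply Finset.mem_image.mpr
      have hu : u ∈ earlier G r v := (mem_earlier G).mpr ⟨hadj, hm⟩
      exact ⟨⟨u, hu⟩, Finset.mem_attach _ _, h⟩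
    intro u v hadj
    rcases Nat.lt_trichotomy (mm G r u) (mm G r v) with h | h | h
    · exact key u v hadj h
    · exact absurd (mm_injective G r h) (G.ne_of_adj hadj)
    · exact (key v u hadj.symm h).symm
end

section
/- Let G be a 3-connected graph and L a degree-assignment for G. Let x and y be non-adjacent vertices such that x has a neighbor z_x and a color a ∈ L(x) \ L(z_x), and y has a neighbor z_y and a color b ∈ L(y) \ L(z_y) (possibly a = b). Then G admits an L-coloring φ with φ(x) = a and φ(y) = b. -/
open scoped Classical

/-- `k`-connectivity: more than `k` vertices, and removing any set of fewer
than `k` vertices leaves a connected graph. -/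
def KConnected {W : Type*} [Fintype W] (k : ℕ) (G : SimpleGraph W) : Prop :=
  k < Fintype.card W ∧
    ∀ S : Finset W, S.card < k → (G.induce ((↑S : Set W)ᶜ)).Connected

private lemma aux_card_inter {V : Type*} [DecidableEq V] (N : Finset V) (x y : V)
    (hxy : x ≠ y) :
    (N ∩ {x, y}).card = (if x ∈ N then 1 else 0) + (if y ∈ N then 1 else 0) := by
  rw [Finset.inter_comm]
  by_cases hx : x ∈ N <;> by_cases hy : y ∈ N <;>
    simp [Finset.insert_inter_of_mem, Finset.insert_inter_of_notMem,
      Finset.singleton_inter_of_mem, Finset.singleton_inter_of_notMem, hx, hy, hxy,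
      Finset.card_insert_of_notMem]

/-- In a 3-connected graph with degree-assignment L, if x and y are
non-adjacent special vertices with special colors a and b respectively,
then G admits an L-coloring assigning a to x and b to y. -/
theorem stmt_4 {V : Type*} [Fintype V] [DecidableEq V] (G : SimpleGraph V)
    [DecidableRel G.Adj] (h3 : KConnected 3 G) (L : V → Finset ℕ)
    (hdeg : ∀ v, G.degree v ≤ (L v).card)
    (x y : V) (hxy : x ≠ y) (hnadj : ¬ G.Adj x y)
    (zx : V) (hzx : G.Adj x zx) (a : ℕ) (ha : a ∈ L x \ L zx)
    (zy : V) (hzy : G.Adj y zy) (b : ℕ) (hb : b ∈ L y \ L zy) :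
    ∃ φ : V → ℕ, (∀ v, φ v ∈ L v) ∧ (∀ u v, G.Adj u v → φ u ≠ φ v) ∧
      φ x = a ∧ φ y = b := by
  classical
  set S : Finset V := {x, y} with hSdef
  have hScard : S.card < 3 := by
    have : S.card ≤ 2 := by
      simp only [hSdef]
      exact (Finset.card_insert_le _ _).trans (by simp)
    omega
  set Wset : Set V := ((↑S : Set V))ᶜ with hWdef
  have hmemW : ∀ v : V, v ∈ Wset ↔ v ≠ x ∧ v ≠ y := by
    intro v; simp [hWdef, hSdef, not_or]
  set H := G.induce Wset with hHdef
  have hH : H.Connected := h3.2 S hScard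
  have hadjH : ∀ u v : ↥Wset, H.Adj u v ↔ G.Adj u.1 v.1 := by
    intro u v; simp [hHdef]
  have hzxW : zx ∈ Wset := by
    rw [hmemW]
    constructor
    · exact fun h => G.irrefl (h ▸ hzx)
    · rintro rfl; exact hnadj hzx
  set zxW : ↥Wset := ⟨zx, hzxW⟩ with hzxWdef
  haveI : Fintype ↥Wset := (Set.toFinite Wset).fintype
  set d : ↥Wset → ℕ := fun w => H.dist zxW w with hddef
  -- closer neighbor
  have hcloser : ∀ v : ↥Wset, v ≠ zxW → ∃ u : ↥Wset, G.Adj v.1 u.1 ∧ d u < d v := by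
    intro v hv
    have hpos : 0 < H.dist zxW v := hH.pos_dist_of_ne (fun h => hv h.symm)
    obtain ⟨p, hp⟩ := hH.exists_walk_length_eq_dist v zxW
    have hplen : p.length = H.dist zxW v := by rw [hp, SimpleGraph.dist_comm]
    cases p with
    | nil => simp at hpos
    | @cons _ u _ h q =>
      refine ⟨u, (hadjH _ _).1 h, ?_⟩
      have : H.dist u zxW ≤ q.length := SimpleGraph.dist_le q
      have h2 : H.dist zxW u ≤ q.length := by rwa [SimpleGraph.dist_comm]
      simp only [SimpleGraph.Walk.length_cons] at hplen
      simp only [hddef]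
      omega
  -- sorted list
  set r : ↥Wset → ↥Wset → Prop := fun u v => d v ≤ d u with hrdef
  haveI : DecidableRel r := fun u v => Nat.decLe _ _
  haveI : IsTotal ↥Wset r := ⟨fun u v => le_total (d v) (d u)⟩
  haveI : IsTrans ↥Wset r := ⟨fun _ _ _ h1 h2 => le_trans h2 h1⟩
  set l : List ↥Wset := List.insertionSort r (Finset.univ : Finset ↥Wset).toList with hldef
  have hlmem : ∀ u : ↥Wset, u ∈ l := by
    intro u
    rw [hldef, List.mem_insertionSort]
    simp
  have hlnodup : l.Nodup := by
    rw [hldef]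
    exact (List.perm_insertionSort r _).nodup_iff.2 (Finset.nodup_toList _)
  have hlsorted : l.Pairwise r := List.pairwise_insertionSort r _
  set n : ℕ := l.length with hndef
  set vtx : ℕ → ↥Wset := fun i => l.getD i zxW with hvtxdef
  have hvtx_inj : ∀ i j, i < n → j < n → vtx i = vtx j → i = j := by
    intro i j hi hj hij
    have hij' : l.getD i zxW = l.getD j zxW := hij
    rw [List.getD_eq_getElem l zxW hi, List.getD_eq_getElem l zxW hj] at hij'
    exact (List.Nodup.getElem_inj_iff hlnodup).1 hij'
  have hvtx_sorted : ∀ i j, i < j → j < n → d (vtx j) ≤ d (vtx i) := by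
    intro i j hij hj
    have := List.pairwise_iff_getElem.1 hlsorted i j (lt_trans hij hj) hj hij
    show d (l.getD j zxW) ≤ d (l.getD i zxW)
    rw [List.getD_eq_getElem l zxW (lt_trans hij hj), List.getD_eq_getElem l zxW hj]
    exact this
  have hvtx_idx : ∀ u : ↥Wset, ∃ i, i < n ∧ vtx i = u := by
    intro u
    have hm := hlmem u
    refine ⟨l.idxOf u, List.idxOf_lt_length_iff.2 hm, ?_⟩
    show l.getD _ zxW = u
    rw [List.getD_eq_getElem l zxW (List.idxOf_lt_length_iff.2 hm)]
    exact List.getElem_idxOf _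
  -- greedy machinery
  set Bad : ↥Wset → Finset ℕ := fun v =>
    (if G.Adj x v.1 then {a} else ∅) ∪ (if G.Adj y v.1 then {b} else ∅) with hBaddef
  set Allowed : ↥Wset → Finset ℕ := fun v => L v.1 \ Bad v with hAdef
  set Forb : List ℕ → ℕ → Finset ℕ := fun c i =>
    ((Finset.range i).filter (fun j => G.Adj (vtx i).1 (vtx j).1)).image
      (fun j => c.getD j 0) with hFdef
  set pick : List ℕ → ℕ → ℕ := fun c i =>
    if h : (Allowed (vtx i) \ Forb c i).Nonempty then h.choose else 0 with hpickdef
  set cs : ℕ → List ℕ := fun m => Nat.rec [] (fun m c => c ++ [pick c m]) m with hcsdef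
  have hcs_succ : ∀ m, cs (m+1) = cs m ++ [pick (cs m) m] := fun m => rfl
  have hcs_len : ∀ m, (cs m).length = m := by
    intro m; induction m with
    | zero => rfl
    | succ m ih => rw [hcs_succ]; simp [ih]
  have hcs_prefix : ∀ m k, m ≤ k → cs m <+: cs k := by
    intro m k hmk
    induction k, hmk using Nat.le_induction with
    | base => exact List.prefix_refl _
    | succ k hk ih => rw [hcs_succ]; exact ih.trans (List.prefix_append _ _)
  have hstab : ∀ m k j, m ≤ k → j < m → (cs k).getD j 0 = (cs m).getD j 0 := by
    intro m k j hmk hj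
    obtain ⟨t, ht⟩ := hcs_prefix m k hmk
    rw [← ht, List.getD_append _ _ _ _ (by rw [hcs_len]; exact hj)]
  have hstep : ∀ m, (cs (m+1)).getD m 0 = pick (cs m) m := by
    intro m
    rw [hcs_succ, List.getD_append_right _ _ _ _ (by rw [hcs_len])]
    simp [hcs_len]
  -- the counting argument
  have hnonempty : ∀ i, i < n → (Allowed (vtx i) \ Forb (cs i) i).Nonempty := by
    intro i hi
    set v := vtx i with hv
    set J := (Finset.range i).filter (fun j => G.Adj v.1 (vtx j).1) with hJ
    have hForb_card : (Forb (cs i) i).card ≤ J.card := Finset.card_image_le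
    have hJmem : ∀ j ∈ J, j < i ∧ G.Adj v.1 (vtx j).1 := by
      intro j hj
      rw [hJ, Finset.mem_filter, Finset.mem_range] at hj
      exact hj
    have hJmap : ∀ j ∈ J, (vtx j).1 ∈ G.neighborFinset v.1 \ S := by
      intro j hj
      obtain ⟨hj1, hj2⟩ := hJmem j hj
      rw [Finset.mem_sdiff, SimpleGraph.mem_neighborFinset]
      refine ⟨hj2, ?_⟩
      have h2 := (vtx j).2
      rw [hmemW] at h2
      simp [hSdef, h2.1, h2.2]
    have hJinj : ∀ j1 ∈ J, ∀ j2 ∈ J, (vtx j1).1 = (vtx j2).1 → j1 = j2 := by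
      intro j1 h1 j2 h2 he
      exact hvtx_inj _ _ (lt_trans (hJmem j1 h1).1 hi) (lt_trans (hJmem j2 h2).1 hi)
        (Subtype.ext he)
    set px : ℕ := if G.Adj x v.1 then 1 else 0 with hpx
    set py : ℕ := if G.Adj y v.1 then 1 else 0 with hpy
    have hNS : (G.neighborFinset v.1 \ S).card + (px + py) = G.degree v.1 := by
      have h1 := Finset.card_sdiff_add_card_inter (G.neighborFinset v.1) S
      have h2 : (G.neighborFinset v.1 ∩ S).card = px + py := by
        rw [hSdef, aux_card_inter _ _ _ hxy]
        congr 1 <;> simp [SimpleGraph.mem_neighborFinset, hpx, hpy, SimpleGraph.adj_comm]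
      rw [h2] at h1
      exact h1
    have hbadpy : (Bad v).card ≤ px + py := by
      refine (Finset.card_union_le _ _).trans ?_
      have h1 : (if G.Adj x v.1 then ({a} : Finset ℕ) else ∅).card ≤ px := by
        rw [hpx]; split <;> simp
      have h2 : (if G.Adj y v.1 then ({b} : Finset ℕ) else ∅).card ≤ py := by
        rw [hpy]; split <;> simp
      exact add_le_add h1 h2
    have hdegL : G.degree v.1 ≤ (L v.1).card := hdeg v.1
    -- main card bound
    have hJbound : J.card + (Bad v ∩ L v.1).card + 1 ≤ (L v.1).card := by
      by_cases hvz : v = zxW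
      · -- v = zx: x-adjacency slack
        have hv1 : v.1 = zx := by rw [hvz]
        have hpx1 : px = 1 := by rw [hpx, if_pos (by rw [hv1]; exact hzx)]
        have hBL : (Bad v ∩ L v.1).card ≤ py := by
          have hsub : Bad v ∩ L v.1 ⊆ (if G.Adj y v.1 then ({b} : Finset ℕ) else ∅) := by
            intro c hc
            rw [Finset.mem_inter] at hc
            rcases Finset.mem_union.1 hc.1 with h1 | h1
            · exfalso
              by_cases hax : G.Adj x v.1
              · rw [if_pos hax, Finset.mem_singleton] at h1
                subst h1
                have hna : c ∉ L zx := (Finset.mem_sdiff.1 ha).2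
                apply hna
                have := hc.2
                rwa [hv1] at this
              · rw [if_neg hax] at h1
                exact absurd h1 (Finset.notMem_empty _)
            · exact h1
          refine (Finset.card_le_card hsub).trans ?_
          rw [hpy]; split <;> simp
        have hJc : J.card ≤ (G.neighborFinset v.1 \ S).card :=
          Finset.card_le_card_of_injOn (fun j => (vtx j).1) hJmap
            (fun j1 h1 j2 h2 => hJinj j1 h1 j2 h2)
        omega
      · obtain ⟨u, hu, hdu⟩ := hcloser v hvz
        obtain ⟨iu, hiu, hviu⟩ := hvtx_idx u
        have hi_lt : i < iu := by
          rcases lt_trichotomy i iu with h | h | h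
          · exact h
          · exfalso
            rw [← h] at hviu
            rw [← hviu, ← hv] at hdu
            omega
          · exfalso
            have := hvtx_sorted iu i h hi
            rw [hviu, ← hv] at this
            omega
        have huNS : u.1 ∈ G.neighborFinset v.1 \ S := by
          rw [Finset.mem_sdiff, SimpleGraph.mem_neighborFinset]
          refine ⟨hu, ?_⟩
          have h2 := u.2
          rw [hmemW] at h2
          simp [hSdef, h2.1, h2.2]
        have hJc : J.card ≤ ((G.neighborFinset v.1 \ S).erase u.1).card := by
          refine Finset.card_le_card_of_injOn (fun j => (vtx j).1) ?_
            (fun j1 h1 j2 h2 => hJinj j1 h1 j2 h2)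
          intro j hj
          rw [Finset.mem_coe, Finset.mem_erase]
          refine ⟨?_, hJmap j hj⟩
          intro he
          have h4 : vtx j = vtx iu := by rw [hviu]; exact Subtype.ext he
          have hj1 := (hJmem j hj).1
          have h5 := hvtx_inj j iu (lt_trans hj1 hi) hiu h4
          omega
        have herase : ((G.neighborFinset v.1 \ S).erase u.1).card
            = (G.neighborFinset v.1 \ S).card - 1 := Finset.card_erase_of_mem huNS
        have hcard_pos : 0 < (G.neighborFinset v.1 \ S).card := Finset.card_pos.2 ⟨u.1, huNS⟩
        have hBL : (Bad v ∩ L v.1).card ≤ px + py :=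
          le_trans (Finset.card_le_card Finset.inter_subset_left) hbadpy
        omega
    rw [← Finset.card_pos]
    have hA1 : (Allowed v).card + (L v.1 ∩ Bad v).card = (L v.1).card :=
      Finset.card_sdiff_add_card_inter _ _
    have hA2 : (L v.1 ∩ Bad v).card = (Bad v ∩ L v.1).card := by rw [Finset.inter_comm]
    have h4 := Finset.le_card_sdiff (Forb (cs i) i) (Allowed v)
    omega
  -- the coloring on Wset
  set φcol : ℕ → ℕ := fun i => (cs n).getD i 0 with hφcoldef
  have hmain : ∀ i, i < n → φcol i ∈ Allowed (vtx i) \ Forb (cs i) i := by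
    intro i hi
    have h1 : φcol i = pick (cs i) i := by
      show (cs n).getD i 0 = _
      rw [hstab (i+1) n i hi (lt_add_one i), hstep]
    have hne := hnonempty i hi
    have h2 : pick (cs i) i = hne.choose := dif_pos hne
    rw [h1, h2]
    exact hne.choose_spec
  have hφcol_L : ∀ i, i < n → φcol i ∈ L (vtx i).1 := by
    intro i hi
    exact (Finset.mem_sdiff.1 (Finset.mem_sdiff.1 (hmain i hi)).1).1
  have hφcol_Bad : ∀ i, i < n → φcol i ∉ Bad (vtx i) := by
    intro i hi
    exact (Finset.mem_sdiff.1 (Finset.mem_sdiff.1 (hmain i hi)).1).2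
  have hφcol_ne : ∀ i j, j < i → i < n → G.Adj (vtx i).1 (vtx j).1 → φcol i ≠ φcol j := by
    intro i j hji hi hadj heq
    have h2 := (Finset.mem_sdiff.1 (hmain i hi)).2
    apply h2
    have h3 : φcol i = (cs i).getD j 0 := by
      rw [heq]
      show (cs n).getD j 0 = _
      exact hstab i n j (le_of_lt hi) hji
    rw [h3]
    exact Finset.mem_image_of_mem _ (Finset.mem_filter.2 ⟨Finset.mem_range.2 hji, hadj⟩)
  have hφcol_ne' : ∀ i j, i < n → j < n → i ≠ j → G.Adj (vtx i).1 (vtx j).1 →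
      φcol i ≠ φcol j := by
    intro i j hi hj hij hadj
    rcases lt_or_gt_of_ne hij with h | h
    · exact fun he => (hφcol_ne j i h hj hadj.symm) he.symm
    · exact hφcol_ne i j h hi hadj
  -- indices
  set idx : ↥Wset → ℕ := fun u => l.idxOf u with hidxdef
  have hidx_lt : ∀ u, idx u < n := fun u => List.idxOf_lt_length_iff.2 (hlmem u)
  have hvtx_idx' : ∀ u, vtx (idx u) = u := by
    intro u
    show l.getD _ zxW = u
    rw [List.getD_eq_getElem l zxW (hidx_lt u)]
    exact List.getElem_idxOf _
  -- the full coloring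
  refine ⟨fun v => if hv : v ∈ Wset then φcol (idx ⟨v, hv⟩) else if v = x then a else b,
    ?_, ?_, ?_, ?_⟩
  · -- colors in lists
    intro v
    show (if hv : v ∈ Wset then φcol (idx ⟨v, hv⟩) else if v = x then a else b) ∈ L v
    split_ifs with hv hvx
    · have h1 := hφcol_L _ (hidx_lt ⟨v, hv⟩)
      rwa [hvtx_idx'] at h1
    · subst hvx
      exact (Finset.mem_sdiff.1 ha).1
    · have hvy : v = y := by
        by_contra hvy
        exact hv ((hmemW v).2 ⟨hvx, hvy⟩)
      subst hvy
      exact (Finset.mem_sdiff.1 hb).1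
  · -- properness
    intro u v hadj
    show (if hu : u ∈ Wset then φcol (idx ⟨u, hu⟩) else if u = x then a else b)
      ≠ (if hv : v ∈ Wset then φcol (idx ⟨v, hv⟩) else if v = x then a else b)
    by_cases hu : u ∈ Wset <;> by_cases hv : v ∈ Wset
    · rw [dif_pos hu, dif_pos hv]
      have hne : idx ⟨u, hu⟩ ≠ idx ⟨v, hv⟩ := by
        intro he
        have h1 : vtx (idx ⟨u, hu⟩) = vtx (idx ⟨v, hv⟩) := by rw [he]
        rw [hvtx_idx', hvtx_idx'] at h1
        exact hadj.ne (congrArg Subtype.val h1)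
      refine hφcol_ne' _ _ (hidx_lt _) (hidx_lt _) hne ?_
      rw [hvtx_idx', hvtx_idx']
      exact hadj
    · -- u ∈ Wset, v ∉ Wset
      rw [dif_pos hu, dif_neg hv]
      have hBadmem : ∀ c : ℕ, c ∈ Bad ⟨u, hu⟩ → φcol (idx ⟨u, hu⟩) ≠ c := by
        intro c hc he
        have := hφcol_Bad _ (hidx_lt ⟨u, hu⟩)
        rw [hvtx_idx'] at this
        exact this (he ▸ hc)
      split_ifs with hvx
      · subst hvx
        refine hBadmem a ?_
        refine Finset.mem_union.2 (Or.inl ?_)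
        rw [if_pos hadj.symm]
        exact Finset.mem_singleton_self a
      · have hvy : v = y := by
          by_contra hvy
          exact hv ((hmemW v).2 ⟨hvx, hvy⟩)
        subst hvy
        refine hBadmem b ?_
        refine Finset.mem_union.2 (Or.inr ?_)
        rw [if_pos hadj.symm]
        exact Finset.mem_singleton_self b
    · -- u ∉ Wset, v ∈ Wset
      rw [dif_neg hu, dif_pos hv]
      have hBadmem : ∀ c : ℕ, c ∈ Bad ⟨v, hv⟩ → φcol (idx ⟨v, hv⟩) ≠ c := by
        intro c hc he
        have := hφcol_Bad _ (hidx_lt ⟨v, hv⟩)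
        rw [hvtx_idx'] at this
        exact this (he ▸ hc)
      split_ifs with hux
      · subst hux
        intro he
        refine hBadmem a ?_ he.symm
        refine Finset.mem_union.2 (Or.inl ?_)
        rw [if_pos hadj]
        exact Finset.mem_singleton_self a
      · have huy : u = y := by
          by_contra huy
          exact hu ((hmemW u).2 ⟨hux, huy⟩)
        subst huy
        intro he
        refine hBadmem b ?_ he.symm
        refine Finset.mem_union.2 (Or.inr ?_)
        rw [if_pos hadj]
        exact Finset.mem_singleton_self b
    · -- neither
      exfalso
      have hux : u = x ∨ u = y := by
        by_contra h
        push_neg at h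
        exact hu ((hmemW u).2 h)
      have hvx : v = x ∨ v = y := by
        by_contra h
        push_neg at h
        exact hv ((hmemW v).2 h)
      rcases hux with rfl | rfl <;> rcases hvx with rfl | rfl
      · exact G.irrefl hadj
      · exact hnadj hadj
      · exact hnadj hadj.symm
      · exact G.irrefl hadj
  · -- φ x = a
    have hx : x ∉ Wset := fun h => ((hmemW x).1 h).1 rfl
    show (if hv : x ∈ Wset then φcol (idx ⟨x, hv⟩) else if x = x then a else b) = a
    rw [dif_neg hx, if_pos rfl]
  · -- φ y = b
    have hy : y ∉ Wset := fun h => ((hmemW y).1 h).2 rfl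
    show (if hv : y ∈ Wset then φcol (idx ⟨y, hv⟩) else if y = x then a else b) = b
    rw [dif_neg hy, if_neg (Ne.symm hxy)]
end

section
/- Let G be a connected graph and L a degree-assignment for G. If G is not L-colorable, then every block of G is a complete graph or an odd cycle (i.e., G is a Gallai tree). -/
open scoped Classical

/-- A set of vertices induces a connected subgraph with no cut-vertex. -/
def Nonseparable {W : Type*} (G : SimpleGraph W) (B : Set W) : Prop :=
  (G.induce B).Connected ∧
    ∀ v ∈ B, (B \ {v}).Nonempty → (G.induce (B \ {v})).Connected

/-- A block of G: a maximal nonseparable set of vertices. -/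
def IsBlock {W : Type*} (G : SimpleGraph W) (B : Set W) : Prop :=
  Nonseparable G B ∧ ∀ B', B ⊆ B' → Nonseparable G B' → B' = B

set_option linter.unusedSectionVars false
set_option maxHeartbeats 1600000
open Finset

namespace BERT

variable {V : Type*} [Fintype V] [DecidableEq V] {G : SimpleGraph V} [DecidableRel G.Adj]

def SR (G : SimpleGraph V) (S : Set V) : V → V → Prop :=
  Relation.ReflTransGen (fun a c => G.Adj a c ∧ a ∈ S ∧ c ∈ S)

noncomputable def nbrB (G : SimpleGraph V) [DecidableRel G.Adj] (S : Set V) (v : V) : Finset V :=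
  univ.filter fun w => w ∈ S ∧ G.Adj v w

noncomputable def degB (G : SimpleGraph V) [DecidableRel G.Adj] (S : Set V) (v : V) : ℕ :=
  (nbrB G S v).card

lemma mem_nbrB {S : Set V} {v w : V} : w ∈ nbrB G S v ↔ w ∈ S ∧ G.Adj v w := by
  simp [nbrB]

lemma SRsymm {S : Set V} {u v : V} (h : SR G S u v) : SR G S v u := by
  refine (@Relation.ReflTransGen.symmetric _ (fun a c => G.Adj a c ∧ a ∈ S ∧ c ∈ S) ⟨?_⟩).symm _ _ h
  intro a b ⟨h1, h2, h3⟩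
  exact ⟨h1.symm, h3, h2⟩

lemma SRtrans {S : Set V} {u v w : V} (h : SR G S u v) (h' : SR G S v w) : SR G S u w :=
  Relation.ReflTransGen.trans h h'

lemma sr_mono {S T : Set V} (hST : S ⊆ T) {u v : V} (h : SR G S u v) : SR G T u v := by
  refine Relation.ReflTransGen.mono ?_ _ _ h
  intro a b ⟨h1, h2, h3⟩
  exact ⟨h1, hST h2, hST h3⟩

/-- if every `S`-vertex reachable from `z` is in `T`, reachability transfers to `T` -/
lemma sr_confine {S T : Set V} {z c : V}
    (h : SR G S z c) (hcl : ∀ w ∈ S, SR G S z w → w ∈ T) : SR G T z c := by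
  induction h with
  | refl => exact Relation.ReflTransGen.refl
  | tail hzu step ih =>
    rename_i u w
    exact Relation.ReflTransGen.tail ih
      ⟨step.1, hcl u step.2.1 hzu, hcl w step.2.2 (hzu.tail step)⟩

/-- convert induced-subgraph connectivity to `SR` -/
lemma conn_to_sr {S : Set V} (h : (G.induce S).Connected) :
    ∀ u ∈ S, ∀ v ∈ S, SR G S u v := by
  suffices H : ∀ (a b : S) (_ : (G.induce S).Walk a b), SR G S a.1 b.1 by
    intro u hu v hv
    exact H ⟨u, hu⟩ ⟨v, hv⟩ (h.preconnected _ _).some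
  intro a b p
  induction p with
  | nil => exact Relation.ReflTransGen.refl
  | @cons a b c h p ih =>
    refine Relation.ReflTransGen.head ?_ ih
    exact ⟨h, a.2, b.2⟩

lemma sr_to_reach {S : Set V} {u v : V} (hu : u ∈ S) (hv : v ∈ S) (h : SR G S u v) :
    (G.induce S).Reachable ⟨u, hu⟩ ⟨v, hv⟩ := by
  induction h with
  | refl => rfl
  | tail hzu step ih =>
    rename_i b c
    have h1 : (G.induce S).Reachable ⟨u, hu⟩ ⟨b, step.2.1⟩ := ih step.2.1
    exact h1.trans (SimpleGraph.Adj.reachable (by exact step.1))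

lemma sr_to_conn {S : Set V} (hne : S.Nonempty)
    (h : ∀ u ∈ S, ∀ v ∈ S, SR G S u v) : (G.induce S).Connected := by
  rw [SimpleGraph.connected_iff]
  refine ⟨?_, ⟨⟨hne.choose, hne.choose_spec⟩⟩⟩
  rintro ⟨u, hu⟩ ⟨v, hv⟩
  exact sr_to_reach hu hv (h u hu v hv)

/-- walking to `a` inside `S`: the last step enters `a` from `S \ {a}` -/
lemma reach_del {S : Set V} {z a : V} (h : SR G S z a) (hza : z ≠ a) :
    ∃ y, G.Adj y a ∧ y ∈ S ∧ y ≠ a ∧ SR G (S \ {a}) z y := by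
  induction h using Relation.ReflTransGen.head_induction_on with
  | refl => exact absurd rfl hza
  | head step h ih =>
    rename_i x w
    by_cases hwa : w = a
    · subst hwa
      exact ⟨x, step.1, step.2.1, hza, Relation.ReflTransGen.refl⟩
    · obtain ⟨y, h1, h2, h3, h4⟩ := ih hwa
      by_cases hxa : x = a
      · exact absurd hxa hza
      · exact ⟨y, h1, h2, h3, Relation.ReflTransGen.head
          ⟨step.1, ⟨step.2.1, hxa⟩, ⟨step.2.2, hwa⟩⟩ h4⟩

/-- crossing lemma: a walk from outside `P` to inside `P` has a crossing edge -/
lemma sr_cross {S : Set V} {P : V → Prop} {x y : V} (h : SR G S x y)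
    (hx : ¬ P x) (hy : P y) :
    ∃ u w, G.Adj u w ∧ ¬ P u ∧ P w ∧ u ∈ S ∧ w ∈ S ∧ SR G S x u := by
  induction h using Relation.ReflTransGen.head_induction_on with
  | refl => exact absurd hy hx
  | head step h ih =>
    rename_i c w
    by_cases hPw : P w
    · exact ⟨c, w, step.1, hx, hPw, step.2.1, step.2.2, Relation.ReflTransGen.refl⟩
    · obtain ⟨u, w', h1, h2, h3, h4, h5, h6⟩ := ih hPw
      exact ⟨u, w', h1, h2, h3, h4, h5, Relation.ReflTransGen.head step h6⟩


/-- greedy colouring along an injective rank function -/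
lemma greedy (A : Finset V) (ℓ : V → Finset ℕ) (f : V → ℕ)
    (hinj : ∀ u ∈ A, ∀ v ∈ A, f u = f v → u = v)
    (h : ∀ v ∈ A, (A.filter (fun u => G.Adj u v ∧ f u < f v)).card < (ℓ v).card) :
    ∃ φ : V → ℕ, (∀ v ∈ A, φ v ∈ ℓ v) ∧ ∀ u ∈ A, ∀ v ∈ A, G.Adj u v → φ u ≠ φ v := by
  obtain ⟨n, hn⟩ : ∃ n, A.card = n := ⟨_, rfl⟩
  induction n using Nat.strong_induction_on generalizing A with
  | _ n ih =>
  rcases A.eq_empty_or_nonempty with rfl | hA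
  · exact ⟨fun _ => 0, by simp, by simp⟩
  obtain ⟨v, hvA, hvmax⟩ := A.exists_max_image f hA
  set A' := A.erase v with hA'
  have hcard : A'.card < n := by
    rw [← hn, hA']; exact Finset.card_erase_lt_of_mem hvA
  have hsubA : A' ⊆ A := Finset.erase_subset _ _
  obtain ⟨φ, hφ1, hφ2⟩ := ih A'.card hcard A'
    (fun u hu w hw he => hinj u (hsubA hu) w (hsubA hw) he)
    (fun w hw => lt_of_le_of_lt
      (Finset.card_le_card (Finset.filter_subset_filter _ hsubA)) (h w (hsubA hw))) rfl
  have hforb : (A'.filter (fun u => G.Adj u v)) ⊆ A.filter (fun u => G.Adj u v ∧ f u < f v) := by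
    intro u hu
    simp only [Finset.mem_filter] at hu ⊢
    have huA : u ∈ A := hsubA hu.1
    have hune : u ≠ v := Finset.ne_of_mem_erase hu.1
    have : f u ≠ f v := fun he => hune (hinj u huA v hvA he)
    exact ⟨huA, hu.2, lt_of_le_of_ne (hvmax u huA) this⟩
  have hcardforb : ((A'.filter (fun u => G.Adj u v)).image φ).card < (ℓ v).card := by
    calc ((A'.filter (fun u => G.Adj u v)).image φ).card
        ≤ (A'.filter (fun u => G.Adj u v)).card := Finset.card_image_le
      _ ≤ (A.filter (fun u => G.Adj u v ∧ f u < f v)).card := Finset.card_le_card hforb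
      _ < (ℓ v).card := h v hvA
  have hne : (ℓ v \ ((A'.filter (fun u => G.Adj u v)).image φ)).Nonempty := by
    by_contra hc
    rw [Finset.not_nonempty_iff_eq_empty, Finset.sdiff_eq_empty_iff_subset] at hc
    exact absurd (Finset.card_le_card hc) (not_le_of_gt hcardforb)
  obtain ⟨c, hc⟩ := hne
  rw [Finset.mem_sdiff] at hc
  refine ⟨Function.update φ v c, ?_, ?_⟩
  · intro w hw
    by_cases hwv : w = v
    · subst hwv; rw [Function.update_self]; exact hc.1
    · rw [Function.update_of_ne hwv]
      exact hφ1 w (Finset.mem_erase.mpr ⟨hwv, hw⟩)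
  · intro u hu w hw hadj
    by_cases huv : u = v <;> by_cases hwv : w = v
    · subst huv; subst hwv; exact absurd hadj (G.irrefl)
    · subst huv
      rw [Function.update_self, Function.update_of_ne hwv]
      intro he
      apply hc.2
      exact Finset.mem_image.mpr ⟨w, Finset.mem_filter.mpr
        ⟨Finset.mem_erase.mpr ⟨hwv, hw⟩, hadj.symm⟩, he.symm⟩
    · subst hwv
      rw [Function.update_self, Function.update_of_ne huv]
      intro he
      apply hc.2
      exact Finset.mem_image.mpr ⟨u, Finset.mem_filter.mpr
        ⟨Finset.mem_erase.mpr ⟨huv, hu⟩, hadj⟩, he⟩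
    · rw [Function.update_of_ne huv, Function.update_of_ne hwv]
      exact hφ2 u (Finset.mem_erase.mpr ⟨huv, hu⟩) w (Finset.mem_erase.mpr ⟨hwv, hw⟩) hadj

/-- rank function decreasing away from a target `t` in a connected set -/
lemma rank_exists (S : Set V) (t : V) (ht : t ∈ S) (hconn : ∀ z ∈ S, SR G S z t) :
    ∃ f : V → ℕ, (∀ u ∈ S, ∀ v ∈ S, f u = f v → u = v) ∧
      (∀ v ∈ S, v ≠ t → ∃ u ∈ S, G.Adj v u ∧ f v < f u) := by
  set C := Fintype.card V with hC
  have hCpos : 0 < C := Fintype.card_pos_iff.mpr ⟨t⟩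
  set emb : V → ℕ := fun v => ((Fintype.equivFin V) v).val with hemb
  have hembC : ∀ v, emb v < C := fun v => ((Fintype.equivFin V) v).2
  set d : V → ℕ := fun v =>
    if h : v ∈ S then (G.induce S).dist ⟨v, h⟩ ⟨t, ht⟩ else 0 with hd
  have hdC : ∀ v, d v < C := by
    intro v
    show (if h : v ∈ S then (G.induce S).dist ⟨v, h⟩ ⟨t, ht⟩ else 0) < C
    split
    · rename_i h
      obtain ⟨p, hp, hlen⟩ :=
        ((sr_to_reach h ht (hconn v h))).exists_path_of_dist
      rw [← hlen]
      calc p.length < Fintype.card S := hp.length_lt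
        _ ≤ C := Fintype.card_le_of_injective Subtype.val Subtype.val_injective
    · exact hCpos
  refine ⟨fun v => C * (C - d v) + emb v, ?_, ?_⟩
  · intro u hu v hv he'
    have he : C * (C - d u) + emb u = C * (C - d v) + emb v := he'
    have h1 : emb u = emb v := by
      have e1 : (C * (C - d u) + emb u) % C = emb u := by
        rw [Nat.mul_add_mod]; exact Nat.mod_eq_of_lt (hembC u)
      have e2 : (C * (C - d v) + emb v) % C = emb v := by
        rw [Nat.mul_add_mod]; exact Nat.mod_eq_of_lt (hembC v)
      rw [← e1, ← e2, he]
    exact (Fintype.equivFin V).injective (Fin.ext h1)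
  · intro v hv hvt
    have hdv : d v = (G.induce S).dist ⟨v, hv⟩ ⟨t, ht⟩ := by
      show (if h : v ∈ S then (G.induce S).dist ⟨v, h⟩ ⟨t, ht⟩ else 0) = _
      rw [dif_pos hv]
    have hdvpos : 0 < d v := by
      rw [hdv]
      exact (sr_to_reach hv ht (hconn v hv)).pos_dist_of_ne (by simpa using hvt)
    obtain ⟨p, hlen⟩ :=
      (sr_to_reach hv ht (hconn v hv)).exists_walk_length_eq_dist
    cases p with
    | nil => rw [← hdv] at hlen; simp at hlen; omega
    | @cons _ b _ hadj q =>
      refine ⟨b.1, b.2, hadj, ?_⟩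
      show C * (C - d v) + emb v < C * (C - d b.1) + emb b.1
      have hdb : d b.1 ≤ d v - 1 := by
        have h2 : d b.1 ≤ (G.induce S).dist b ⟨t, ht⟩ := by
          show (if h : b.1 ∈ S then (G.induce S).dist ⟨b.1, h⟩ ⟨t, ht⟩ else 0) ≤ _
          rw [dif_pos b.2]
        have h3 : (G.induce S).dist b ⟨t, ht⟩ ≤ q.length := SimpleGraph.dist_le q
        have h4 : q.length = d v - 1 := by
          rw [hdv]; simp [SimpleGraph.Walk.length_cons] at hlen; omega
        omega
      have hdvC : d v < C := hdC v
      calc C * (C - d v) + emb v < C * (C - d v) + C := by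
            exact Nat.add_lt_add_left (hembC v) _
        _ = C * (C - d v + 1) := by ring
        _ ≤ C * (C - d b.1) := Nat.mul_le_mul_left C (by omega)
        _ ≤ C * (C - d b.1) + emb b.1 := Nat.le_add_right _ _


/-- colour a connected set greedily towards a surplus vertex `t` -/
lemma surplus_color (S : Set V) (t : V) (ht : t ∈ S) (hconn : ∀ z ∈ S, SR G S z t)
    (ℓ : V → Finset ℕ) (hcard : ∀ v ∈ S, v ≠ t → degB G S v ≤ (ℓ v).card)
    (hts : degB G S t < (ℓ t).card) :
    ∃ φ : V → ℕ, (∀ v ∈ S, φ v ∈ ℓ v) ∧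
      ∀ u ∈ S, ∀ v ∈ S, G.Adj u v → φ u ≠ φ v := by
  obtain ⟨f, hinj, hstep⟩ := rank_exists S t ht hconn
  have hmem : ∀ v : V, v ∈ S.toFinset ↔ v ∈ S := fun v => Set.mem_toFinset
  have hcond : ∀ v ∈ S.toFinset,
      (S.toFinset.filter (fun u => G.Adj u v ∧ f u < f v)).card < (ℓ v).card := by
    intro v hv
    have hvS : v ∈ S := (hmem v).mp hv
    by_cases hvt : v = t
    · subst hvt
      refine lt_of_le_of_lt ?_ hts
      refine Finset.card_le_card ?_
      intro u hu
      simp only [Finset.mem_filter] at hu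
      exact mem_nbrB.mpr ⟨(hmem u).mp hu.1, hu.2.1.symm⟩
    · obtain ⟨u', hu'S, hadj', hf'⟩ := hstep v hvS hvt
      have hsub : S.toFinset.filter (fun u => G.Adj u v ∧ f u < f v) ⊆
          (nbrB G S v).erase u' := by
        intro u hu
        simp only [Finset.mem_filter] at hu
        refine Finset.mem_erase.mpr ⟨?_, mem_nbrB.mpr ⟨(hmem u).mp hu.1, hu.2.1.symm⟩⟩
        intro he; subst he; omega
      have hu'mem : u' ∈ nbrB G S v := mem_nbrB.mpr ⟨hu'S, hadj'⟩
      have h5 : ((nbrB G S v).erase u').card < degB G S v := by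
        rw [degB]; exact Finset.card_erase_lt_of_mem hu'mem
      exact lt_of_le_of_lt (Finset.card_le_card hsub)
        (lt_of_lt_of_le h5 (hcard v hvS hvt))
  obtain ⟨φ, h1, h2⟩ := greedy S.toFinset ℓ f
    (fun u hu v hv he => hinj u ((hmem u).mp hu) v ((hmem v).mp hv) he) hcond
  exact ⟨φ, fun v hv => h1 v ((hmem v).mpr hv),
    fun u hu v hv hadj => h2 u ((hmem u).mpr hu) v ((hmem v).mpr hv) hadj⟩


lemma pairdiff_comm {B : Set V} {p q : V} : B \ {p, q} = B \ {q, p} := by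
  ext w; simp; tauto

lemma deldel {B : Set V} {p q : V} : (B \ {q}) \ {p} = B \ {p, q} := by
  ext w; simp; tauto

/-- every "component" of `B \ {p,q}` contains a neighbour of `p` -/
lemma comp_nbr {B : Set V}
    (hdel : ∀ x ∈ B, (B \ {x}).Nonempty → (G.induce (B \ {x})).Connected)
    {p q z : V} (hp : p ∈ B) (hq : q ∈ B) (hpq : p ≠ q) (hz : z ∈ B \ {p, q}) :
    ∃ y, G.Adj y p ∧ y ∈ B \ {p, q} ∧ SR G (B \ {p, q}) z y := by
  have hzB : z ∈ B := hz.1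
  have hzp : z ≠ p := by intro h; subst h; simp at hz
  have hzq : z ≠ q := by intro h; subst h; simp at hz
  have hne : (B \ {q}).Nonempty := ⟨p, hp, by simpa using hpq⟩
  have hc := hdel q hq hne
  have hsr : SR G (B \ {q}) z p :=
    conn_to_sr hc z ⟨hzB, by simpa using hzq⟩ p ⟨hp, by simpa using hpq⟩
  obtain ⟨y, h1, h2, h3, h4⟩ := reach_del hsr hzp
  rw [deldel] at h4
  have hyq : y ≠ q := by simpa using h2.2
  exact ⟨y, h1, ⟨h2.1, by simp [h3, hyq]⟩, h4⟩

/-- a nonadjacent pair yields a distance-2 configuration -/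
lemma dist2_pair {B : Set V} (hconn : (G.induce B).Connected)
    {x y : V} (hx : x ∈ B) (hy : y ∈ B) (hxy : x ≠ y) (hnadj : ¬ G.Adj x y) :
    ∃ a ∈ B, ∃ b ∈ B, ∃ v ∈ B, a ≠ b ∧ ¬ G.Adj a b ∧ G.Adj v a ∧ G.Adj v b := by
  have hr : (G.induce B).Reachable ⟨x, hx⟩ ⟨y, hy⟩ := hconn.preconnected _ _
  obtain ⟨p, hlen⟩ := hr.exists_walk_length_eq_dist
  set d := (G.induce B).dist ⟨x, hx⟩ ⟨y, hy⟩ with hd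
  have hd0 : d ≠ 0 := by
    have := hr.pos_dist_of_ne (by simpa using hxy)
    omega
  have hd1 : d ≠ 1 := by
    intro h1
    rw [hd] at h1
    have : (G.induce B).Adj ⟨x, hx⟩ ⟨y, hy⟩ := SimpleGraph.dist_eq_one_iff_adj.mp h1
    exact hnadj this
  cases p with
  | nil => simp at hlen; omega
  | @cons _ b1 _ h1 q =>
    cases q with
    | nil =>
      simp [SimpleGraph.Walk.length_cons] at hlen; omega
    | @cons _ b2 _ h2 q2 =>
      refine ⟨x, hx, b2.1, b2.2, b1.1, b1.2, ?_, ?_, h1.symm, h2⟩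
      · intro he
        have : (⟨x, hx⟩ : B) = b2 := Subtype.ext he
        subst this
        have : d ≤ q2.length := SimpleGraph.dist_le q2
        simp [SimpleGraph.Walk.length_cons] at hlen
        omega
      · intro hadj
        have hw : (G.induce B).Adj ⟨x, hx⟩ b2 := hadj
        have : d ≤ (SimpleGraph.Walk.cons hw q2).length := SimpleGraph.dist_le _
        simp [SimpleGraph.Walk.length_cons] at hlen this
        omega

noncomputable def compF (G : SimpleGraph V) [DecidableRel G.Adj] (S : Set V) (z : V) :
    Finset V := univ.filter (fun w => w ∈ S ∧ SR G S z w)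

def validPair (G : SimpleGraph V) (B : Set V) (p : V × V) : Prop :=
  p.1 ∈ B ∧ p.2 ∈ B ∧ p.1 ≠ p.2 ∧ ¬ G.Adj p.1 p.2 ∧ ∃ v ∈ B, G.Adj v p.1 ∧ G.Adj v p.2

noncomputable def mval (G : SimpleGraph V) [DecidableRel G.Adj] (B : Set V) (p : V × V) : ℕ :=
  ((B \ {p.1, p.2}).toFinset).sup (fun z => (compF G (B \ {p.1, p.2}) z).card)

lemma mem_compF {S : Set V} {z w : V} : w ∈ compF G S z ↔ w ∈ S ∧ SR G S z w := by
  simp [compF]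

lemma sr_single {S : Set V} {x y : V} (h : G.Adj x y) (hx : x ∈ S) (hy : y ∈ S) :
    SR G S x y := Relation.ReflTransGen.single ⟨h, hx, hy⟩

lemma bump {B : Set V}
    (hdel : ∀ x ∈ B, (B \ {x}).Nonempty → (G.induce (B \ {x})).Connected)
    {a b u w zs : V} (haB : a ∈ B) (hbB : b ∈ B) (hab : a ≠ b)
    (hu : u ∈ B \ {a, b}) (hwS : w ∈ B \ {a, b})
    (hnadj_au : ¬ G.Adj a u) (hwa : G.Adj w a) (hwu : G.Adj w u)
    (hzs : zs ∈ B \ {a, b}) (hsep : ¬ SR G (B \ {a, b}) zs u) :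
    validPair G B (a, u) ∧ (compF G (B \ {a, b}) zs).card < mval G B (a, u) := by
  have huB : u ∈ B := hu.1
  have hua : u ≠ a := by intro h; subst h; simp at hu
  have hub : u ≠ b := by intro h; subst h; simp at hu
  have hzsu : zs ≠ u := by intro h; subst h; exact hsep Relation.ReflTransGen.refl
  have hzsa : zs ≠ a := by intro h; subst h; simp at hzs
  have hzsb : zs ≠ b := by intro h; subst h; simp at hzs
  have hvalid : validPair G B (a, u) :=
    ⟨haB, huB, Ne.symm hua, hnadj_au, ⟨w, hwS.1, hwa, hwu⟩⟩
  refine ⟨hvalid, ?_⟩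
  have hclosure : ∀ c ∈ B \ {a, b}, SR G (B \ {a, b}) zs c → c ∈ B \ {a, u} := by
    intro c hc hsr
    refine ⟨hc.1, ?_⟩
    have hca : c ≠ a := by intro h; subst h; simp at hc
    have hcu : c ≠ u := by intro h; subst h; exact hsep hsr
    simp [hca, hcu]
  have step1 : ∀ c, SR G (B \ {a, b}) zs c → SR G (B \ {a, u}) zs c :=
    fun c h => sr_confine h hclosure
  have hbS3 : b ∈ B \ {a, u} := ⟨hbB, by simp [Ne.symm hab, Ne.symm hub]⟩
  obtain ⟨yb, hyb1, hyb2, hyb3⟩ :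
      ∃ y, G.Adj y b ∧ y ∈ B \ {a, b} ∧ SR G (B \ {a, b}) zs y := by
    have := comp_nbr hdel hbB haB (Ne.symm hab)
      (show zs ∈ B \ {b, a} from ⟨hzs.1, by simp [hzsb, hzsa]⟩)
    obtain ⟨y, h1, h2, h3⟩ := this
    have hBeq : B \ {b, a} = B \ {a, b} := pairdiff_comm
    rw [hBeq] at h2 h3
    exact ⟨y, h1, h2, h3⟩
  have hSRb : SR G (B \ {a, u}) zs b :=
    Relation.ReflTransGen.tail (step1 yb hyb3) ⟨hyb1, hclosure yb hyb2 hyb3, hbS3⟩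
  have hsubset : insert b (compF G (B \ {a, b}) zs) ⊆ compF G (B \ {a, u}) zs := by
    intro c hc
    rcases Finset.mem_insert.mp hc with rfl | hc
    · exact mem_compF.mpr ⟨hbS3, hSRb⟩
    · rw [mem_compF] at hc
      exact mem_compF.mpr ⟨hclosure c hc.1 hc.2, step1 c hc.2⟩
  have hbnot : b ∉ compF G (B \ {a, b}) zs := by
    rw [mem_compF]; rintro ⟨⟨_, h⟩, _⟩; simp at h
  have hzsS3 : zs ∈ (B \ {a, u}).toFinset := by
    rw [Set.mem_toFinset]; exact ⟨hzs.1, by simp [hzsa, hzsu]⟩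
  calc (compF G (B \ {a, b}) zs).card
      < (insert b (compF G (B \ {a, b}) zs)).card := by
        rw [Finset.card_insert_of_notMem hbnot]; omega
    _ ≤ (compF G (B \ {a, u}) zs).card := Finset.card_le_card hsubset
    _ ≤ mval G B (a, u) := by
        show _ ≤ ((B \ {a, u}).toFinset).sup (fun z => (compF G (B \ {a, u}) z).card)
        exact Finset.le_sup (f := fun z => (compF G (B \ {a, u}) z).card) hzsS3


lemma lovasz {B : Set V}
    (hconnB : (G.induce B).Connected)
    (hdel : ∀ x ∈ B, (B \ {x}).Nonempty → (G.induce (B \ {x})).Connected)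
    (hdeg3 : ∀ v ∈ B, 3 ≤ degB G B v)
    {x0 y0 : V} (hx0 : x0 ∈ B) (hy0 : y0 ∈ B) (hxy0 : x0 ≠ y0) (hnadj0 : ¬ G.Adj x0 y0) :
    ∃ a ∈ B, ∃ b ∈ B, ∃ v ∈ B, a ≠ b ∧ ¬ G.Adj a b ∧ G.Adj v a ∧ G.Adj v b ∧
      ∀ z ∈ B \ {a, b}, SR G (B \ {a, b}) z v := by
  classical
  set P : Finset (V × V) := univ.filter (validPair G B) with hPdef
  have hPne : P.Nonempty := by
    obtain ⟨a, ha, b, hb, v, hv, h1, h2, h3, h4⟩ := dist2_pair hconnB hx0 hy0 hxy0 hnadj0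
    exact ⟨(a, b), by simp [hPdef]; exact ⟨ha, hb, h1, h2, v, hv, h3, h4⟩⟩
  obtain ⟨⟨a, b⟩, hprP, hprmax⟩ := P.exists_max_image (mval G B) hPne
  have hval : validPair G B (a, b) := by simpa [hPdef] using hprP
  simp only [validPair] at hval
  obtain ⟨haB, hbB, hab, hnadjab, v, hvB, hva, hvb⟩ := hval
  have hvS2 : v ∈ B \ {a, b} :=
    ⟨hvB, by simp [G.ne_of_adj hva, G.ne_of_adj hvb]⟩
  by_cases hgoal : ∀ z ∈ B \ {a, b}, SR G (B \ {a, b}) z v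
  · exact ⟨a, haB, b, hbB, v, hvB, hab, hnadjab, hva, hvb, hgoal⟩
  push_neg at hgoal
  obtain ⟨z₀, hz₀S2, hz₀⟩ := hgoal
  have hS2ne : ((B \ {a, b}) : Set V).toFinset.Nonempty := ⟨v, Set.mem_toFinset.mpr hvS2⟩
  obtain ⟨zs, hzsmem, hzseq⟩ :=
    Finset.exists_mem_eq_sup _ hS2ne (fun z => (compF G (B \ {a, b}) z).card)
  have hzs : zs ∈ B \ {a, b} := Set.mem_toFinset.mp hzsmem
  have hmab : mval G B (a, b) = (compF G (B \ {a, b}) zs).card := by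
    show Finset.sup _ _ = _; exact hzseq
  -- a component separated from that of `zs`
  obtain ⟨zE, hzES2, hsep⟩ : ∃ zE ∈ B \ {a, b}, ¬ SR G (B \ {a, b}) zs zE := by
    by_cases hc : SR G (B \ {a, b}) zs z₀
    · refine ⟨v, hvS2, fun h => hz₀ (SRtrans (SRsymm hc) h)⟩
    · exact ⟨z₀, hz₀S2, hc⟩
  have hdisj : ∀ w, SR G (B \ {a, b}) zs w → SR G (B \ {a, b}) zE w → False :=
    fun w h1 h2 => hsep (SRtrans h1 (SRsymm h2))
  -- neighbours of `b` in components (set-swap of comp_nbr)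
  have comp_nbr_b : ∀ z ∈ B \ {a, b}, ∃ y, G.Adj y b ∧ y ∈ B \ {a, b} ∧
      SR G (B \ {a, b}) z y := by
    intro z hz
    have hz' : z ∈ B \ {b, a} := ⟨hz.1, by
      have h1 : z ≠ a := by intro h; subst h; simp at hz
      have h2 : z ≠ b := by intro h; subst h; simp at hz
      simp [h1, h2]⟩
    obtain ⟨y, h1, h2, h3⟩ := comp_nbr hdel hbB haB (Ne.symm hab) hz'
    have hBeq : B \ {b, a} = B \ {a, b} := pairdiff_comm
    rw [hBeq] at h2 h3
    exact ⟨y, h1, h2, h3⟩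
  by_cases hEa : ∀ e ∈ B \ {a, b}, SR G (B \ {a, b}) zE e → G.Adj a e
  · by_cases hEb : ∀ e ∈ B \ {a, b}, SR G (B \ {a, b}) zE e → G.Adj b e
    · -- both `a` and `b` see all of the component E of zE
      by_cases hclq : ∀ e1 ∈ B \ {a, b}, SR G (B \ {a, b}) zE e1 →
          ∀ e2 ∈ B \ {a, b}, SR G (B \ {a, b}) zE e2 → e1 ≠ e2 → G.Adj e1 e2
      · -- E is a clique : use (zE, a'') with common neighbour a
        obtain ⟨ya, hya1, hya2, hya3⟩ := comp_nbr hdel haB hbB hab hzs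
        have hsepya : ¬ SR G (B \ {a, b}) zE ya := fun h => hdisj ya hya3 h
        have hnadjEya : ¬ G.Adj zE ya := fun h =>
          hsepya (sr_single h hzES2 hya2)
        have hneEya : zE ≠ ya := by
          intro h; subst h; exact hsepya Relation.ReflTransGen.refl
        -- a second vertex of E adjacent to zE
        have hdegE := hdeg3 zE hzES2.1
        obtain ⟨e₂, he₂⟩ : ∃ e₂, e₂ ∈ nbrB G B zE ∧ e₂ ≠ a ∧ e₂ ≠ b := by
          have hsub : (nbrB G B zE \ {a, b}).Nonempty := by
            rw [← Finset.card_pos]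
            have h1 : (nbrB G B zE).card - ({a, b} : Finset V).card ≤
                (nbrB G B zE \ {a, b}).card := Finset.le_card_sdiff _ _
            have h2 : ({a, b} : Finset V).card ≤ 2 :=
              (Finset.card_insert_le _ _).trans (by simp)
            have h3 : degB G B zE = (nbrB G B zE).card := rfl
            omega
          obtain ⟨e₂, he₂⟩ := hsub
          rw [Finset.mem_sdiff] at he₂
          refine ⟨e₂, he₂.1, ?_, ?_⟩ <;>
            · intro h; subst h; simp at he₂
        obtain ⟨he₂nbr, he₂a, he₂b⟩ := he₂
        rw [mem_nbrB] at he₂nbr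
        have he₂S2 : e₂ ∈ B \ {a, b} := ⟨he₂nbr.1, by simp [he₂a, he₂b]⟩
        have he₂E : SR G (B \ {a, b}) zE e₂ := sr_single he₂nbr.2 hzES2 he₂S2
        have he₂ya : e₂ ≠ ya := by
          intro h; subst h; exact hsepya he₂E
        -- neighbours of zE classified
        have hNB : ∀ w', w' ∈ B → G.Adj zE w' →
            w' = a ∨ w' = b ∨ (w' ∈ B \ {a, b} ∧ SR G (B \ {a, b}) zE w') := by
          intro w' hw'B hadj
          by_cases h1 : w' = a
          · exact Or.inl h1
          by_cases h2 : w' = b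
          · exact Or.inr (Or.inl h2)
          have hw'S2 : w' ∈ B \ {a, b} := ⟨hw'B, by simp [h1, h2]⟩
          exact Or.inr (Or.inr ⟨hw'S2, sr_single hadj hzES2 hw'S2⟩)
        have hyaB : ya ∈ B := hya2.1
        have haya : a ≠ ya := by intro h; subst h; simp at hya2
        have hbya : b ≠ ya := by intro h; subst h; simp at hya2
        have hazE : a ≠ zE := by intro h; subst h; simp at hzES2
        have hbzE : b ≠ zE := by intro h; subst h; simp at hzES2
        have hconn2 : ∀ z ∈ B \ ({zE, ya} : Set V), SR G (B \ {zE, ya}) z a := by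
          intro z hz
          have hzB : z ∈ B := hz.1
          have hzzE : z ≠ zE := by intro h; subst h; simp at hz
          have hzya : z ≠ ya := by intro h; subst h; simp at hz
          by_cases hza : z = a
          · rw [hza]; exact Relation.ReflTransGen.refl
          have hBya : (B \ {ya}).Nonempty := ⟨a, haB, by simpa using haya⟩
          have hcdel := hdel ya hyaB hBya
          have hsr : SR G (B \ {ya}) z zE :=
            conn_to_sr hcdel z ⟨hzB, by simpa using hzya⟩ zE ⟨hzES2.1, by simpa using hneEya⟩
          obtain ⟨y, hy1, hy2, hy3, hy4⟩ := reach_del hsr hzzE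
          rw [deldel] at hy4
          have hyB : y ∈ B := hy2.1
          have hyya : y ≠ ya := by simpa using hy2.2
          have hymem : y ∈ B \ ({zE, ya} : Set V) := ⟨hyB, by simp [hy3, hyya]⟩
          have hamem : a ∈ B \ ({zE, ya} : Set V) := ⟨haB, by simp [hazE, haya]⟩
          rcases hNB y hyB hy1.symm with heq | heq | ⟨hyS2, hySR⟩
          · rw [heq] at hy4; exact hy4
          · -- y = b : go through e₂
            rw [heq] at hy4
            have hbmem : b ∈ B \ ({zE, ya} : Set V) := ⟨hbB, by simp [hbzE, hbya]⟩
            have he₂mem : e₂ ∈ B \ ({zE, ya} : Set V) :=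
              ⟨he₂nbr.1, by simp [he₂ya, G.ne_of_adj he₂nbr.2.symm]⟩
            have s1 : SR G (B \ {zE, ya}) b e₂ :=
              sr_single (hEb e₂ he₂S2 he₂E) hbmem he₂mem
            have s2 : SR G (B \ {zE, ya}) e₂ a :=
              sr_single (hEa e₂ he₂S2 he₂E).symm he₂mem hamem
            exact SRtrans hy4 (SRtrans s1 s2)
          · exact Relation.ReflTransGen.tail hy4 ⟨(hEa y hyS2 hySR).symm, hymem, hamem⟩
        exact ⟨zE, hzES2.1, ya, hyaB, a, haB, hneEya, hnadjEya,
          hEa zE hzES2 Relation.ReflTransGen.refl, hya1.symm, hconn2⟩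
      · -- E not a clique : two nonadjacent vertices with common neighbour a
        push_neg at hclq
        obtain ⟨e1, he1S2, he1sr, e2, he2S2, he2sr, hne12, hnadj12⟩ := hclq
        obtain ⟨ya, hya1, hya2, hya3⟩ := comp_nbr hdel haB hbB hab hzs
        have hae1 : a ≠ e1 := by intro h; subst h; simp at he1S2
        have hae2 : a ≠ e2 := by intro h; subst h; simp at he2S2
        have hbe1 : b ≠ e1 := by intro h; subst h; simp at he1S2
        have hbe2 : b ≠ e2 := by intro h; subst h; simp at he2S2
        have hamem : a ∈ B \ ({e1, e2} : Set V) := ⟨haB, by simp [hae1, hae2]⟩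
        have hHCcl : ∀ c, SR G (B \ {a, b}) zs c →
            (∀ w ∈ B \ {a, b}, SR G (B \ {a, b}) c w → w ∈ B \ ({e1, e2} : Set V)) := by
          intro c hc w hwS2 hw
          have hzsw : SR G (B \ {a, b}) zs w := SRtrans hc hw
          refine ⟨hwS2.1, ?_⟩
          have h1 : w ≠ e1 := by
            intro h; subst h; exact hdisj w hzsw he1sr
          have h2 : w ≠ e2 := by
            intro h; subst h; exact hdisj w hzsw he2sr
          simp [h1, h2]
        have HC : ∀ c, SR G (B \ {a, b}) zs c → c ∈ B \ {a, b} →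
            SR G (B \ ({e1, e2} : Set V)) c a := by
          intro c hc hcS2
          have h1 : SR G (B \ {a, b}) c ya := SRtrans (SRsymm hc) hya3
          have h2 : SR G (B \ ({e1, e2} : Set V)) c ya :=
            sr_confine h1 (hHCcl c hc)
          exact Relation.ReflTransGen.tail h2
            ⟨hya1, hHCcl zs Relation.ReflTransGen.refl ya hya2 hya3, hamem⟩
        have hconnE : ∀ z ∈ B \ ({e1, e2} : Set V), SR G (B \ ({e1, e2} : Set V)) z a := by
          intro z hz
          have hzB : z ∈ B := hz.1
          have hze1 : z ≠ e1 := by intro h; subst h; simp at hz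
          have hze2 : z ≠ e2 := by intro h; subst h; simp at hz
          by_cases hza : z = a
          · rw [hza]; exact Relation.ReflTransGen.refl
          by_cases hzb : z = b
          · rw [hzb]
            obtain ⟨yb, hyb1, hyb2, hyb3⟩ := comp_nbr_b zs hzs
            have hybmem : yb ∈ B \ ({e1, e2} : Set V) :=
              hHCcl zs Relation.ReflTransGen.refl yb hyb2 hyb3
            have hbmem : b ∈ B \ ({e1, e2} : Set V) := ⟨hbB, by simp [hbe1, hbe2]⟩
            refine SRtrans (sr_single hyb1.symm hbmem hybmem) ?_
            exact HC yb hyb3 hyb2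
          have hzS2 : z ∈ B \ {a, b} := ⟨hzB, by simp [hza, hzb]⟩
          by_cases hzE2 : SR G (B \ {a, b}) zE z
          · have hzmem : z ∈ B \ ({e1, e2} : Set V) := ⟨hzB, by simp [hze1, hze2]⟩
            exact sr_single (hEa z hzS2 hzE2).symm hzmem hamem
          by_cases hzC : SR G (B \ {a, b}) zs z
          · exact HC z hzC hzS2
          · obtain ⟨y, hy1, hy2, hy3⟩ := comp_nbr hdel haB hbB hab hzS2
            have hcl : ∀ w ∈ B \ {a, b}, SR G (B \ {a, b}) z w →
                w ∈ B \ ({e1, e2} : Set V) := by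
              intro w hwS2 hw
              refine ⟨hwS2.1, ?_⟩
              have h1 : w ≠ e1 := by
                intro h; subst h
                exact hzE2 (SRtrans he1sr (SRsymm hw))
              have h2 : w ≠ e2 := by
                intro h; subst h
                exact hzE2 (SRtrans he2sr (SRsymm hw))
              simp [h1, h2]
            have h2 : SR G (B \ ({e1, e2} : Set V)) z y := sr_confine hy3 hcl
            exact Relation.ReflTransGen.tail h2 ⟨hy1, hcl y hy2 hy3, hamem⟩
        exact ⟨e1, he1S2.1, e2, he2S2.1, a, haB, hne12, hnadj12,
          hEa e1 he1S2 he1sr, hEa e2 he2S2 he2sr, hconnE⟩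
    · -- b misses some vertex of E : bump contradiction on pair (b, u)
      push_neg at hEb
      obtain ⟨e, heS2, hesr, henadj⟩ := hEb
      obtain ⟨y, hy1, hy2, hy3⟩ := comp_nbr_b zE hzES2
      obtain ⟨u, w, h1, h2, h3, h4, h5, h6⟩ :=
        sr_cross (P := fun w => G.Adj b w) (SRtrans (SRsymm hesr) hy3) henadj hy1.symm
      have huE : SR G (B \ {a, b}) zE u := SRtrans hesr h6
      have hsepu : ¬ SR G (B \ {a, b}) zs u := fun h => hdisj u h huE
      have hswap : ∀ x, x ∈ B \ {a, b} → x ∈ B \ {b, a} := by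
        intro x hx
        have h1 : x ≠ a := by intro h; subst h; simp at hx
        have h2 : x ≠ b := by intro h; subst h; simp at hx
        exact ⟨hx.1, by simp [h1, h2]⟩
      have hsrswap : ∀ x y, SR G (B \ {a, b}) x y → SR G (B \ {b, a}) x y := by
        intro x y h
        rwa [show B \ ({a, b} : Set V) = B \ {b, a} from pairdiff_comm] at h
      obtain ⟨hvalid2, hlt⟩ := bump hdel hbB haB (Ne.symm hab) (hswap u h4) (hswap w h5)
        h2 h3.symm h1.symm (hswap zs hzs)
        (fun h => hsepu (by rwa [show B \ ({b, a} : Set V) = B \ {a, b} from pairdiff_comm] at h))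
      have hle := hprmax (b, u) (by simp [hPdef]; exact hvalid2)
      rw [show B \ ({b, a} : Set V) = B \ {a, b} from pairdiff_comm] at hlt
      omega
  · -- a misses some vertex of E : bump contradiction on pair (a, u)
    push_neg at hEa
    obtain ⟨e, heS2, hesr, henadj⟩ := hEa
    obtain ⟨y, hy1, hy2, hy3⟩ := comp_nbr hdel haB hbB hab hzES2
    obtain ⟨u, w, h1, h2, h3, h4, h5, h6⟩ :=
      sr_cross (P := fun w => G.Adj a w) (SRtrans (SRsymm hesr) hy3) henadj hy1.symm
    have huE : SR G (B \ {a, b}) zE u := SRtrans hesr h6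
    have hsepu : ¬ SR G (B \ {a, b}) zs u := fun h => hdisj u h huE
    obtain ⟨hvalid2, hlt⟩ := bump hdel haB hbB hab h4 h5 h2 h3.symm h1.symm hzs hsepu
    have hle := hprmax (a, u) (by simp [hPdef]; exact hvalid2)
    omega


end BERT

namespace BERT
variable {V : Type*} [Fintype V] [DecidableEq V] {G : SimpleGraph V} [DecidableRel G.Adj]

/-- structure of a connected 2-regular set: a cyclic enumeration -/
lemma cycle_struct {B : Set V} {v0 : V} (hv0 : v0 ∈ B)
    (hconn : ∀ u ∈ B, ∀ v ∈ B, SR G B u v)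
    (hdeg2 : ∀ v ∈ B, degB G B v = 2) :
    ∃ (n : ℕ) (w : ℕ → V), 3 ≤ n ∧ n = B.toFinset.card ∧
      (∀ i, w i ∈ B) ∧ (∀ i, G.Adj (w i) (w (i+1))) ∧
      (∀ i, w (i + n) = w i) ∧
      (∀ i j, i < n → j < n → w i = w j → i = j) ∧
      (∀ z ∈ B, ∃ i, i < n ∧ w i = z) ∧
      (∀ i, nbrB G B (w i) = {w (i + n - 1), w (i + 1)}) := by
  classical
  -- "other" neighbour
  have hother : ∀ prev cur, cur ∈ B → prev ∈ nbrB G B cur →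
      ∃ o, o ∈ nbrB G B cur ∧ o ≠ prev ∧ ∀ z ∈ nbrB G B cur, z ≠ prev → z = o := by
    intro prev cur hcur hprev
    have hcard : ((nbrB G B cur).erase prev).card = 1 := by
      have h2 : (nbrB G B cur).card = 2 := hdeg2 cur hcur
      rw [Finset.card_erase_of_mem hprev, h2]
    obtain ⟨o, ho⟩ := Finset.card_eq_one.mp hcard
    have homem : o ∈ (nbrB G B cur).erase prev := by rw [ho]; exact Finset.mem_singleton_self o
    refine ⟨o, (Finset.mem_erase.mp homem).2, (Finset.mem_erase.mp homem).1, ?_⟩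
    intro z hz hzp
    have : z ∈ (nbrB G B cur).erase prev := Finset.mem_erase.mpr ⟨hzp, hz⟩
    rw [ho] at this; exact Finset.mem_singleton.mp this
  set other : V → V → V := fun prev cur =>
    if h : ∃ o, o ∈ (nbrB G B cur).erase prev then h.choose else cur with hother_def
  have hother_spec : ∀ prev cur, cur ∈ B → prev ∈ nbrB G B cur →
      other prev cur ∈ nbrB G B cur ∧ other prev cur ≠ prev ∧
        ∀ z ∈ nbrB G B cur, z ≠ prev → z = other prev cur := by
    intro prev cur hcur hprev
    obtain ⟨o, ho1, ho2, ho3⟩ := hother prev cur hcur hprev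
    have hex : ∃ x, x ∈ (nbrB G B cur).erase prev := ⟨o, Finset.mem_erase.mpr ⟨ho2, ho1⟩⟩
    have : other prev cur = hex.choose := by
      show (if h : ∃ o, o ∈ (nbrB G B cur).erase prev then h.choose else cur) = _
      rw [dif_pos hex]
    have hc := hex.choose_spec
    rw [Finset.mem_erase] at hc
    have heq : other prev cur = o := by
      rw [this]; exact ho3 _ hc.2 hc.1
    rw [heq]
    exact ⟨ho1, ho2, ho3⟩
  -- the walk
  obtain ⟨p0, hp0⟩ : ∃ p0, p0 ∈ nbrB G B v0 := by
    have h2 : (nbrB G B v0).card = 2 := hdeg2 v0 hv0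
    have : (nbrB G B v0).Nonempty := by rw [← Finset.card_pos, h2]; omega
    exact this
  set F : ℕ → V × V := fun n => n.rec (v0, p0) (fun _ pr => (pr.2, other pr.1 pr.2)) with hFdef
  have hF0 : F 0 = (v0, p0) := rfl
  have hFs : ∀ n, F (n+1) = ((F n).2, other (F n).1 (F n).2) := fun n => rfl
  set w : ℕ → V := fun n => (F n).1 with hwdef
  have hInv : ∀ n, (F n).1 ∈ B ∧ (F n).2 ∈ B ∧ G.Adj (F n).1 (F n).2 := by
    intro n
    induction n with
    | zero =>
      rw [hF0]
      have := mem_nbrB.mp hp0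
      exact ⟨hv0, this.1, this.2⟩
    | succ n ih =>
      rw [hFs]
      have hmem : (F n).1 ∈ nbrB G B (F n).2 := mem_nbrB.mpr ⟨ih.1, ih.2.2.symm⟩
      obtain ⟨h1, h2, h3⟩ := hother_spec (F n).1 (F n).2 ih.2.1 hmem
      have := mem_nbrB.mp h1
      exact ⟨ih.2.1, this.1, this.2⟩
  have hwB : ∀ i, w i ∈ B := fun i => (hInv i).1
  have hadjw : ∀ i, G.Adj (w i) (w (i+1)) := by
    intro i
    have h85 : w (i+1) = (F i).2 := rfl
    rw [h85]
    exact (hInv i).2.2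
  have hInv2 : ∀ i, w (i + 2) ≠ w i := by
    intro i
    have h1 : w (i + 2) = other (F i).1 (F i).2 := rfl
    have hmem : (F i).1 ∈ nbrB G B (F i).2 := mem_nbrB.mpr ⟨(hInv i).1, (hInv i).2.2.symm⟩
    obtain ⟨_, h2, _⟩ := hother_spec (F i).1 (F i).2 (hInv i).2.1 hmem
    rw [h1]
    exact h2
  -- step injectivity
  have hstepinj : ∀ m k, F (m + 1) = F (k + 1) → F m = F k := by
    intro m k he
    rw [hFs, hFs] at he
    have h2 : (F m).2 = (F k).2 := congrArg Prod.fst he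
    have h3 : other (F m).1 (F m).2 = other (F k).1 (F k).2 := congrArg Prod.snd he
    rw [← h2] at h3
    have hmm : (F m).1 ∈ nbrB G B (F m).2 := mem_nbrB.mpr ⟨(hInv m).1, (hInv m).2.2.symm⟩
    have hkm : (F k).1 ∈ nbrB G B (F m).2 := by
      rw [h2]; exact mem_nbrB.mpr ⟨(hInv k).1, (hInv k).2.2.symm⟩
    obtain ⟨hs1, hs2, hs3⟩ := hother_spec (F m).1 (F m).2 (hInv m).2.1 hmm
    -- (F k).1 must equal (F m).1
    by_cases heq : (F k).1 = (F m).1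
    · exact Prod.ext heq.symm h2
    · exfalso
      have := hs3 (F k).1 hkm heq
      -- (F k).1 = other (F m).1 (F m).2 but other (F k).1 (F m).2 = other (F m).1 (F m).2
      obtain ⟨ht1, ht2, ht3⟩ := hother_spec (F k).1 (F m).2 (hInv m).2.1 hkm
      rw [← h3] at ht2
      exact ht2 (this.symm ▸ rfl)
  have hcancel : ∀ d i, F i = F (i + d) → F 0 = F d := by
    intro d i
    induction i with
    | zero => intro h; simpa using h
    | succ i ih =>
      intro h
      have : i + 1 + d = (i + d) + 1 := by omega
      rw [this] at h
      exact ih (hstepinj i (i + d) h)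
  -- periodicity exists
  have hex : ∃ m, 0 < m ∧ F m = F 0 := by
    have hcard : (Finset.range (Fintype.card (V × V) + 1)).card > Fintype.card (V × V) := by
      simp
    obtain ⟨i, hi, j, hj, hij, he⟩ :=
      Finset.exists_ne_map_eq_of_card_lt_of_maps_to hcard
        (fun i _ => Finset.mem_univ (F i))
    rcases Nat.lt_or_ge i j with h | h
    · exact ⟨j - i, by omega, (hcancel (j - i) i (by rw [show i + (j - i) = j by omega]; exact he)).symm⟩
    · have h' : j < i := by omega
      exact ⟨i - j, by omega, (hcancel (i - j) j (by rw [show j + (i - j) = i by omega]; exact he.symm)).symm⟩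
  set n := Nat.find hex with hn_def
  obtain ⟨hnpos, hFn⟩ : 0 < n ∧ F n = F 0 := Nat.find_spec hex
  have hnmin : ∀ m, 0 < m → m < n → F m ≠ F 0 := by
    intro m hm1 hm2 he
    exact Nat.find_min hex hm2 ⟨hm1, he⟩
  have hn3 : 3 ≤ n := by
    rcases Nat.lt_or_ge n 3 with h | h
    · exfalso
      interval_cases n
      · -- n = 1 : F 1 = F 0 means p0 = v0
        have hpv : p0 = v0 := congrArg Prod.fst hFn
        have hadj0 : G.Adj v0 p0 := (hInv 0).2.2
        exact G.ne_of_adj hadj0 hpv.symm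
      · -- n = 2 : w 2 = w 0
        have := congrArg Prod.fst hFn
        have h2 : w 2 ≠ w 0 := hInv2 0
        exact h2 this
    · exact h
  have hper : ∀ i, F (i + n) = F i := by
    intro i
    induction i with
    | zero => simpa using hFn
    | succ i ih =>
      have : i + 1 + n = (i + n) + 1 := by omega
      rw [this, hFs, hFs, ih]
  have hwper : ∀ i, w (i + n) = w i := fun i => congrArg Prod.fst (hper i)
  have hwmod : ∀ i, w i = w (i % n) := by
    intro i
    induction i using Nat.strong_induction_on with
    | _ i ih =>
      rcases Nat.lt_or_ge i n with h | h
      · rw [Nat.mod_eq_of_lt h]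
      · have h1 : i = (i - n) + n := by omega
        have h2 : i % n = (i - n) % n := by
          conv_lhs => rw [h1]
          rw [Nat.add_mod_right]
        rw [h2]
        conv_lhs => rw [h1]
        rw [hwper]
        exact ih (i - n) (by omega)
  -- neighbour characterization
  have hnbr : ∀ i, nbrB G B (w i) = {w (i + n - 1), w (i + 1)} := by
    intro i
    have e1 : i + n - 1 + 1 = i + n := by omega
    have hadj1 : G.Adj (w i) (w (i + n - 1)) := by
      have := hadjw (i + n - 1)
      rw [e1, hwper] at this
      exact this.symm
    have hadj2 : G.Adj (w i) (w (i + 1)) := hadjw i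
    have hne : w (i + n - 1) ≠ w (i + 1) := by
      have := hInv2 (i + n - 1)
      rw [show i + n - 1 + 2 = (i + 1) + n by omega, hwper] at this
      exact fun he => this he.symm
    have hsub : {w (i + n - 1), w (i + 1)} ⊆ nbrB G B (w i) := by
      intro z hz
      rcases Finset.mem_insert.mp hz with heqz | hz
      · rw [heqz]; exact mem_nbrB.mpr ⟨hwB (i + n - 1), hadj1⟩
      · rw [Finset.mem_singleton] at hz; rw [hz]
        exact mem_nbrB.mpr ⟨hwB (i + 1), hadj2⟩
    have hcard2 : ({w (i + n - 1), w (i + 1)} : Finset V).card = 2 := by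
      rw [Finset.card_insert_of_notMem (by simpa using hne), Finset.card_singleton]
    refine (Finset.eq_of_subset_of_card_le hsub ?_).symm
    rw [hcard2]
    exact le_of_eq (hdeg2 (w i) (hwB i))
  -- injectivity via palindrome argument
  have hinj : ∀ i j, i < n → j < n → w i = w j → i = j := by
    intro i j hi hj he
    by_contra hne
    -- wlog i < j
    wlog hij : i < j generalizing i j
    · exact this j i hj hi he.symm (Ne.symm hne) (by omega)
    -- compare successors
    by_cases hsucc : w (i + 1) = w (j + 1)
    · have hF : F i = F j := by
        refine Prod.ext he ?_
        have h1 : (F i).2 = w (i + 1) := rfl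
        have h2 : (F j).2 = w (j + 1) := rfl
        rw [h1, h2, hsucc]
      have := hcancel (j - i) i (by rw [show i + (j - i) = j by omega]; exact hF)
      exact hnmin (j - i) (by omega) (by omega) this.symm
    · -- reversal case: palindrome contradiction
      have hmem : w (j + 1) ∈ nbrB G B (w i) := by
        rw [he]; exact mem_nbrB.mpr ⟨hwB (j + 1), hadjw j⟩
      rw [hnbr i] at hmem
      rcases Finset.mem_insert.mp hmem with hrev | hmem
      swap
      · rw [Finset.mem_singleton] at hmem; exact hsucc hmem.symm
      -- w (j+1) = w (i + n - 1)
      set A := j with hA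
      set s := i + n - j with hs
      have hs1 : 1 ≤ s := by omega
      have hbase0 : w A = w (A + s) := by
        rw [show A + s = i + n by omega, hwper, he]
      have hbase1 : w (A + 1) = w (A + s - 1) := by
        rw [show A + s - 1 = i + n - 1 by omega]
        exact hrev
      have pal : ∀ t, t ≤ s → w (A + t) = w (A + s - t) := by
        intro t
        induction t using Nat.strong_induction_on with
        | _ t ih =>
          match t with
          | 0 => intro _; simpa using hbase0
          | 1 => intro _; exact hbase1
          | (t + 2) =>
            intro ht
            have p0 := ih t (by omega) (by omega)
            have p1 := ih (t + 1) (by omega) (by omega)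
            -- w (A+t+2) ∈ nbrB (w (A+t+1)) = nbrB (w (A+s-t-1))
            have hm : w ((A + (t+1)) + 1) ∈ nbrB G B (w (A + (t+1))) :=
              mem_nbrB.mpr ⟨hwB ((A + (t+1)) + 1), hadjw (A + (t+1))⟩
            rw [p1] at hm
            rw [hnbr (A + s - (t+1))] at hm
            have e2 : A + s - (t + 1) + n - 1 = (A + s - (t + 2)) + n := by omega
            have e3 : A + s - (t + 1) + 1 = A + s - t := by omega
            rw [e2, e3, hwper] at hm
            rcases Finset.mem_insert.mp hm with hgood | hbad
            · rw [show A + (t + 2) = (A + (t+1)) + 1 by omega]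
              exact hgood
            · rw [Finset.mem_singleton] at hbad
              exfalso
              rw [← p0] at hbad
              rw [show (A + (t+1)) + 1 = A + t + 2 by omega] at hbad
              exact hInv2 (A + t) hbad
      -- parity contradiction
      rcases Nat.even_or_odd s with hpar | hpar
      · obtain ⟨k, hk⟩ := hpar
        have hk2 : 1 ≤ k := by omega
        have := pal (k - 1) (by omega)
        rw [show A + s - (k - 1) = (A + (k - 1)) + 2 by omega] at this
        exact hInv2 (A + (k-1)) this.symm
      · obtain ⟨k, hk⟩ := hpar
        have := pal k (by omega)
        rw [show A + s - k = (A + k) + 1 by omega] at this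
        exact G.ne_of_adj (hadjw (A + k)) this
  -- surjectivity
  have hsurj : ∀ z ∈ B, ∃ i, i < n ∧ w i = z := by
    intro z hz
    have hsr : SR G B v0 z := hconn v0 hv0 z hz
    suffices h : ∃ i, w i = z by
      obtain ⟨i, hi⟩ := h
      exact ⟨i % n, Nat.mod_lt i hnpos, by rw [← hwmod, hi]⟩
    induction hsr with
    | refl => exact ⟨0, rfl⟩
    | tail hz1 step ih =>
      rename_i u z'
      obtain ⟨i, hi⟩ := ih (mem_nbrB.mp (mem_nbrB.mpr ⟨step.2.1, step.1.symm⟩)).1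
      have : z' ∈ nbrB G B (w i) := by
        rw [hi]; exact mem_nbrB.mpr ⟨step.2.2, step.1⟩
      rw [hnbr i] at this
      rcases Finset.mem_insert.mp this with h | h
      · exact ⟨i + n - 1, h.symm⟩
      · rw [Finset.mem_singleton] at h; exact ⟨i + 1, h.symm⟩
  -- cardinality
  have hncard : n = B.toFinset.card := by
    have himg : (Finset.range n).image w = B.toFinset := by
      apply Finset.Subset.antisymm
      · intro z hz
        obtain ⟨i, _, hi⟩ := Finset.mem_image.mp hz
        rw [← hi, Set.mem_toFinset]; exact hwB i
      · intro z hz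
        rw [Set.mem_toFinset] at hz
        obtain ⟨i, hi1, hi2⟩ := hsurj z hz
        exact Finset.mem_image.mpr ⟨i, Finset.mem_range.mpr hi1, hi2⟩
    rw [← himg]
    rw [Finset.card_image_of_injOn]
    · simp
    · intro i hi j hj he
      exact hinj i j (Finset.mem_range.mp hi) (Finset.mem_range.mp hj) he
  exact ⟨n, w, hn3, hncard, hwB, hadjw, hwper, hinj, hsurj, hnbr⟩


lemma period_mod {α : Type*} (w : ℕ → α) (n : ℕ) (hn : 0 < n)
    (hper : ∀ i, w (i + n) = w i) : ∀ i, w i = w (i % n) := by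
  intro i
  induction i using Nat.strong_induction_on with
  | _ i ih =>
    rcases Nat.lt_or_ge i n with h | h
    · rw [Nat.mod_eq_of_lt h]
    · have h1 : i = (i - n) + n := by omega
      have h2 : i % n = (i - n) % n := by
        conv_lhs => rw [h1]
        rw [Nat.add_mod_right]
      rw [h2]
      conv_lhs => rw [h1]
      rw [hper]
      exact ih (i - n) (by omega)

/-- adjacency characterization in terms of indices -/
lemma cycle_adj_char {B : Set V} {n : ℕ} {w : ℕ → V} (hn3 : 3 ≤ n)
    (hwB : ∀ i, w i ∈ B) (hadjw : ∀ i, G.Adj (w i) (w (i+1)))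
    (hper : ∀ i, w (i + n) = w i)
    (hinj : ∀ i j, i < n → j < n → w i = w j → i = j)
    (hnbr : ∀ i, nbrB G B (w i) = {w (i + n - 1), w (i + 1)}) :
    ∀ i j, i < n → j < n →
      (G.Adj (w i) (w j) ↔ (j = (i + 1) % n ∨ i = (j + 1) % n)) := by
  have hwmod := period_mod w n (by omega) hper
  intro i j hi hj
  constructor
  · intro hadj
    have hmem : w j ∈ nbrB G B (w i) := mem_nbrB.mpr ⟨hwB j, hadj⟩
    rw [hnbr i] at hmem
    rcases Finset.mem_insert.mp hmem with heq | heq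
    · right
      have h1 : j = (i + n - 1) % n := by
        have := hinj j ((i + n - 1) % n) hj (Nat.mod_lt _ (by omega)) (by
          rw [heq]; exact hwmod (i + n - 1))
        exact this
      calc i = (i + n) % n := by rw [Nat.add_mod_right, Nat.mod_eq_of_lt hi]
        _ = (i + n - 1 + 1) % n := by rw [show i + n - 1 + 1 = i + n by omega]
        _ = ((i + n - 1) % n + 1) % n := by rw [Nat.mod_add_mod]
        _ = (j + 1) % n := by rw [← h1]
    · rw [Finset.mem_singleton] at heq
      left
      have := hinj j ((i + 1) % n) hj (Nat.mod_lt _ (by omega)) (by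
        rw [heq]; exact hwmod (i + 1))
      exact this
  · intro h
    rcases h with h | h
    · have : w j = w (i + 1) := by rw [h, ← hwmod]
      rw [this]
      exact hadjw i
    · have : w i = w (j + 1) := by rw [h, ← hwmod]
      rw [this]
      exact (hadjw j).symm

lemma cycle_iso {B : Set V} {n : ℕ} {w : ℕ → V} (hn3 : 3 ≤ n)
    (hwB : ∀ i, w i ∈ B) (hadjw : ∀ i, G.Adj (w i) (w (i+1)))
    (hper : ∀ i, w (i + n) = w i)
    (hinj : ∀ i j, i < n → j < n → w i = w j → i = j)
    (hsurj : ∀ z ∈ B, ∃ i, i < n ∧ w i = z)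
    (hnbr : ∀ i, nbrB G B (w i) = {w (i + n - 1), w (i + 1)}) :
    Nonempty ((G.induce B) ≃g SimpleGraph.cycleGraph n) := by
  have : NeZero n := ⟨by omega⟩
  have hchar := cycle_adj_char hn3 hwB hadjw hper hinj hnbr
  -- the equivalence
  have hbij : Function.Bijective (fun i : Fin n => (⟨w i.val, hwB i.val⟩ : B)) := by
    constructor
    · intro i j he
      have : w i.val = w j.val := congrArg Subtype.val he
      exact Fin.ext (hinj i.val j.val i.isLt j.isLt this)
    · rintro ⟨z, hz⟩
      obtain ⟨i, hi, hwi⟩ := hsurj z hz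
      exact ⟨⟨i, hi⟩, Subtype.ext hwi⟩
  set e := Equiv.ofBijective _ hbij with he_def
  -- Fin-side characterization of cycleGraph adjacency
  have hval1 : (1 : Fin n).val = 1 := by
    rw [Fin.val_one']
    exact Nat.mod_eq_of_lt (by omega)
  have key : ∀ i j : Fin n, ((i - j).val = 1) ↔ i.val = (j.val + 1) % n := by
    intro i j
    have step1 : ((i - j).val = 1) ↔ (i - j = 1) :=
      ⟨fun h => Fin.ext (by rw [hval1]; exact h), fun h => by rw [h, hval1]⟩
    rw [step1, sub_eq_iff_eq_add']
    constructor
    · intro h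
      rw [h, Fin.val_add, hval1]
    · intro h
      apply Fin.ext
      rw [Fin.val_add, hval1]
      exact h
  have hfin : ∀ i j : Fin n, (SimpleGraph.cycleGraph n).Adj i j ↔
      (j.val = (i.val + 1) % n ∨ i.val = (j.val + 1) % n) := by
    intro i j
    rw [SimpleGraph.cycleGraph_adj', key i j, key j i]
    tauto
  refine ⟨SimpleGraph.Iso.symm ⟨e, ?_⟩⟩
  intro i j
  have h1 : (G.induce B).Adj (e i) (e j) ↔ G.Adj (w i.val) (w j.val) := Iff.rfl
  rw [h1, hfin i j, hchar i.val j.val i.isLt j.isLt]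


lemma cycle_even_coloring {B : Set V} {n : ℕ} {w : ℕ → V} (hn3 : 3 ≤ n) (heven : Even n)
    (hwB : ∀ i, w i ∈ B) (hadjw : ∀ i, G.Adj (w i) (w (i+1)))
    (hper : ∀ i, w (i + n) = w i)
    (hinj : ∀ i j, i < n → j < n → w i = w j → i = j)
    (hsurj : ∀ z ∈ B, ∃ i, i < n ∧ w i = z)
    (hnbr : ∀ i, nbrB G B (w i) = {w (i + n - 1), w (i + 1)})
    (c1 c2 : ℕ) (hc : c1 ≠ c2) :
    ∃ ψ : V → ℕ, (∀ z ∈ B, ψ z ∈ ({c1, c2} : Finset ℕ)) ∧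
      ∀ u ∈ B, ∀ v ∈ B, G.Adj u v → ψ u ≠ ψ v := by
  classical
  have hchar := cycle_adj_char hn3 hwB hadjw hper hinj hnbr
  set idx : V → ℕ := fun z => if h : ∃ i, i < n ∧ w i = z then h.choose else 0 with hidx
  have hidx_spec : ∀ z ∈ B, idx z < n ∧ w (idx z) = z := by
    intro z hz
    have hex : ∃ i, i < n ∧ w i = z := hsurj z hz
    have : idx z = hex.choose := by
      show (if h : ∃ i, i < n ∧ w i = z then h.choose else 0) = _
      rw [dif_pos hex]
    rw [this]
    exact hex.choose_spec
  refine ⟨fun z => if (idx z) % 2 = 0 then c1 else c2, ?_, ?_⟩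
  · intro z _
    by_cases h : (idx z) % 2 = 0 <;> simp [h]
  · intro u hu v hv hadj
    obtain ⟨hiu, hwu⟩ := hidx_spec u hu
    obtain ⟨hiv, hwv⟩ := hidx_spec v hv
    have hadj' : G.Adj (w (idx u)) (w (idx v)) := by rw [hwu, hwv]; exact hadj
    have hrel := (hchar (idx u) (idx v) hiu hiv).mp hadj'
    obtain ⟨k, hk⟩ := heven
    have hpar : (idx u) % 2 ≠ (idx v) % 2 := by
      rcases hrel with h | h
      · rcases Nat.lt_or_ge (idx u + 1) n with h2 | h2
        · rw [Nat.mod_eq_of_lt h2] at h; omega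
        · have h3 : idx u + 1 = n := by omega
          rw [h3, Nat.mod_self] at h
          omega
      · rcases Nat.lt_or_ge (idx v + 1) n with h2 | h2
        · rw [Nat.mod_eq_of_lt h2] at h; omega
        · have h3 : idx v + 1 = n := by omega
          rw [h3, Nat.mod_self] at h
          omega
    by_cases h1 : (idx u) % 2 = 0 <;> by_cases h2 : (idx v) % 2 = 0 <;>
      simp [h1, h2] at hpar ⊢ <;> omega

lemma nbrB_del1 {B : Set V} {u z : V} :
    nbrB G (B \ {u}) z = (nbrB G B z).erase u := by
  ext x
  simp only [mem_nbrB, Finset.mem_erase, Set.mem_diff, Set.mem_singleton_iff]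
  tauto

lemma nbrB_del2 {B : Set V} {a b z : V} :
    nbrB G (B \ {a, b}) z = ((nbrB G B z).erase a).erase b := by
  ext x
  simp only [mem_nbrB, Finset.mem_erase, Set.mem_diff, Set.mem_insert_iff,
    Set.mem_singleton_iff]
  tauto

/-- The core: a 2-connected vertex set which is neither complete nor an odd cycle is
degree-choosable. -/
lemma core {B : Set V} (hns1 : (G.induce B).Connected)
    (hns2 : ∀ x ∈ B, (B \ {x}).Nonempty → (G.induce (B \ {x})).Connected)
    (hnc : ∃ x ∈ B, ∃ y ∈ B, x ≠ y ∧ ¬ G.Adj x y)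
    (hno : ¬ ∃ n : ℕ, Odd n ∧ 3 ≤ n ∧ Nonempty ((G.induce B) ≃g SimpleGraph.cycleGraph n))
    (M : V → Finset ℕ) (hM : ∀ u ∈ B, degB G B u ≤ (M u).card) :
    ∃ ψ : V → ℕ, (∀ u ∈ B, ψ u ∈ M u) ∧ ∀ u ∈ B, ∀ v ∈ B, G.Adj u v → ψ u ≠ ψ v := by
  classical
  obtain ⟨x, hx, y, hy, hxy, hnadj⟩ := hnc
  have hsr : ∀ u ∈ B, ∀ v ∈ B, SR G B u v := conn_to_sr hns1
  -- Case 1 : surplus vertex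
  by_cases hsurplus : ∃ u ∈ B, degB G B u < (M u).card
  · obtain ⟨u, hu, hlt⟩ := hsurplus
    exact surplus_color B u hu (fun z hz => hsr z hz u hu) M
      (fun v hv _ => hM v hv) hlt
  push_neg at hsurplus
  have heq : ∀ u ∈ B, (M u).card = degB G B u :=
    fun u hu => le_antisymm (hsurplus u hu) (hM u hu)
  -- Case 2 : unequal lists on an edge
  by_cases huneq : ∃ u ∈ B, ∃ v ∈ B, G.Adj u v ∧ ¬ (M u ⊆ M v)
  · obtain ⟨u, hu, v, hv, hadj, hsub⟩ := huneq
    obtain ⟨c, hcu, hcv⟩ := Finset.not_subset.mp hsub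
    have hvu : v ≠ u := fun h => G.irrefl (h ▸ hadj)
    have hne' : (B \ {u}).Nonempty := ⟨v, hv, by simpa using hvu⟩
    have hsr' := conn_to_sr (hns2 u hu hne')
    set M' : V → Finset ℕ := fun z => if G.Adj u z then (M z).erase c else M z with hM'
    have hM'le : ∀ z, M' z ⊆ M z := by
      intro z w hw
      by_cases h : G.Adj u z
      · simp only [hM', if_pos h] at hw; exact Finset.erase_subset _ _ hw
      · simpa only [hM', if_neg h] using hw
    obtain ⟨φ', hφ'1, hφ'2⟩ := surplus_color (B \ {u}) v ⟨hv, by simpa using hvu⟩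
      (fun z hz => hsr' z hz v ⟨hv, by simpa using hvu⟩) M'
      (by
        intro z hz _
        rw [degB, nbrB_del1]
        by_cases h : G.Adj u z
        · have hM'z : M' z = (M z).erase c := by simp only [hM', if_pos h]
          rw [hM'z]
          have h1 : (M z).card - 1 ≤ ((M z).erase c).card := by
            rcases Finset.decidableMem c (M z) with h2 | h2
            · rw [Finset.erase_eq_of_notMem h2]; omega
            · rw [Finset.card_erase_of_mem h2]
          have h2 : ((nbrB G B z).erase u).card ≤ (nbrB G B z).card - 1 := by
            have : u ∈ nbrB G B z := mem_nbrB.mpr ⟨hu, h.symm⟩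
            rw [Finset.card_erase_of_mem this]
          have h3 := heq z hz.1
          have hdd : degB G B z = (nbrB G B z).card := rfl
          omega
        · have hM'z : M' z = M z := by simp only [hM', if_neg h]
          rw [hM'z]
          have h2 : ((nbrB G B z).erase u).card ≤ (nbrB G B z).card :=
            Finset.card_le_card (Finset.erase_subset _ _)
          have h3 := heq z hz.1
          have hdd : degB G B z = (nbrB G B z).card := rfl
          omega)
      (by
        rw [degB, nbrB_del1]
        have hM'v : M' v = M v := by
          have : (M v).erase c = M v := Finset.erase_eq_of_notMem hcv
          by_cases h : G.Adj u v
          · simp only [hM', if_pos h, this]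
          · simp only [hM', if_neg h]
        rw [hM'v]
        have humem : u ∈ nbrB G B v := mem_nbrB.mpr ⟨hu, hadj.symm⟩
        rw [Finset.card_erase_of_mem humem]
        have h3 := heq v hv
        have h4 : 0 < (nbrB G B v).card := Finset.card_pos.mpr ⟨u, humem⟩
        have hdd : degB G B v = (nbrB G B v).card := rfl
        omega)
    refine ⟨fun z => if z = u then c else φ' z, ?_, ?_⟩
    · intro z hz
      show (if z = u then c else φ' z) ∈ M z
      by_cases h : z = u
      · rw [if_pos h, h]; exact hcu
      · rw [if_neg h]
        exact hM'le z (hφ'1 z ⟨hz, by simpa using h⟩)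
    · intro z hz z' hz' hadj'
      show (if z = u then c else φ' z) ≠ (if z' = u then c else φ' z')
      by_cases h1 : z = u <;> by_cases h2 : z' = u
      · exact absurd (h1 ▸ h2 ▸ hadj') (G.irrefl)
      · rw [if_pos h1, if_neg h2]
        subst h1
        have : φ' z' ∈ M' z' := hφ'1 z' ⟨hz', by simpa using h2⟩
        rw [show M' z' = (M z').erase c from by simp only [hM', if_pos hadj']] at this
        exact fun he => (Finset.mem_erase.mp this).1 he.symm
      · rw [if_neg h1, if_pos h2]
        subst h2
        have : φ' z ∈ M' z := hφ'1 z ⟨hz, by simpa using h1⟩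
        rw [show M' z = (M z).erase c from by simp only [hM', if_pos hadj'.symm]] at this
        exact (Finset.mem_erase.mp this).1
      · rw [if_neg h1, if_neg h2]
        exact hφ'2 z ⟨hz, by simpa using h1⟩ z' ⟨hz', by simpa using h2⟩ hadj'
  -- Case 3 : all lists equal along edges
  push_neg at huneq
  have hedge : ∀ u ∈ B, ∀ v ∈ B, G.Adj u v → M u = M v :=
    fun u hu v hv h => Finset.Subset.antisymm (huneq u hu v hv h) (huneq v hv u hu h.symm)
  have hMall : ∀ z ∈ B, M z = M x := by
    intro z hz
    have h := hsr x hx z hz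
    induction h with
    | refl => rfl
    | tail hsr1 step ih =>
      rename_i b' c'
      rw [← hedge b' step.2.1 c' step.2.2 step.1]
      exact ih step.2.1
  set k := (M x).card with hk
  have hreg : ∀ z ∈ B, degB G B z = k := by
    intro z hz
    rw [← heq z hz, hMall z hz]
  rcases Nat.lt_or_ge k 2 with hk2 | hk2
  · -- k ≤ 1 : impossible
    exfalso
    rcases Nat.eq_zero_or_pos k with hk0 | hk0
    · -- k = 0 : x has no neighbours but B has ≥ 2 vertices
      have h := hsr x hx y hy
      rcases Relation.ReflTransGen.cases_head h with h1 | ⟨w, step, _⟩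
      · exact hxy h1
      · have : w ∈ nbrB G B x := mem_nbrB.mpr ⟨step.2.2, step.1⟩
        have h2 := hreg x hx
        rw [degB] at h2
        rw [hk0] at h2
        rw [Finset.card_eq_zero] at h2
        rw [h2] at this
        simp at this
    · -- k = 1
      have hk1 : k = 1 := by omega
      have h2 := hreg x hx
      rw [degB, hk1, Finset.card_eq_one] at h2
      obtain ⟨w, hw⟩ := h2
      have hwx : w ∈ nbrB G B x := by rw [hw]; exact Finset.mem_singleton_self w
      rw [mem_nbrB] at hwx
      have hclosed : ∀ z, SR G B x z → z = x ∨ z = w := by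
        intro z hz
        induction hz with
        | refl => exact Or.inl rfl
        | tail hsr1 step ih =>
          rename_i b' c'
          rcases ih with h1 | h1
          · rw [h1] at step
            have : c' ∈ nbrB G B x := mem_nbrB.mpr ⟨step.2.2, step.1⟩
            rw [hw] at this
            exact Or.inr (Finset.mem_singleton.mp this)
          · rw [h1] at step
            have hw2 := hreg w hwx.1
            rw [degB, hk1, Finset.card_eq_one] at hw2
            obtain ⟨w', hw'⟩ := hw2
            have hxw' : x ∈ nbrB G B w := mem_nbrB.mpr ⟨hx, hwx.2.symm⟩
            rw [hw'] at hxw'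
            have hx_eq : x = w' := Finset.mem_singleton.mp hxw'
            have : c' ∈ nbrB G B w := mem_nbrB.mpr ⟨step.2.2, step.1⟩
            rw [hw'] at this
            exact Or.inl (by rw [Finset.mem_singleton.mp this, ← hx_eq])
      rcases hclosed y (hsr x hx y hy) with h1 | h1
      · exact hxy (h1.symm)
      · subst h1
        exact hnadj hwx.2
  rcases Nat.eq_or_lt_of_le hk2 with hk2' | hk3
  · -- k = 2 : cycle
    obtain ⟨n, w, hn3, hncard, hwB, hadjw, hper, hinj, hsurj, hnbr⟩ :=
      cycle_struct hx (fun u hu v' hv' => hsr u hu v' hv') (fun v' hv' => by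
        rw [hreg v' hv']; omega)
    rcases Nat.even_or_odd n with hpar | hpar
    · -- even : 2-colouring
      obtain ⟨c1, c2, hc12, hMx⟩ := Finset.card_eq_two.mp (by omega : (M x).card = 2)
      obtain ⟨ψ, hψ1, hψ2⟩ := cycle_even_coloring hn3 hpar hwB hadjw hper hinj hsurj hnbr
        c1 c2 hc12
      refine ⟨ψ, ?_, hψ2⟩
      intro u hu
      rw [hMall u hu, hMx]
      exact hψ1 u hu
    · -- odd : contradiction
      exact absurd ⟨n, hpar, hn3, cycle_iso hn3 hwB hadjw hper hinj hsurj hnbr⟩ hno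
  · -- k ≥ 3 : Brooks via Lovász configuration
    obtain ⟨a, haB, b, hbB, t, htB, hab, hnadjab, hta, htb, hconnL⟩ :=
      lovasz hns1 hns2 (fun v' hv' => by rw [hreg v' hv']; omega) hx hy hxy hnadj
    have htS : t ∈ B \ ({a, b} : Set V) :=
      ⟨htB, by simp [G.ne_of_adj hta, G.ne_of_adj htb]⟩
    obtain ⟨c, hc⟩ : (M x).Nonempty := Finset.card_pos.mp (by omega)
    set M' : V → Finset ℕ := fun z =>
      if G.Adj a z ∨ G.Adj b z then (M z).erase c else M z with hM'
    have hM'le : ∀ z, M' z ⊆ M z := by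
      intro z w' hw'
      by_cases h : G.Adj a z ∨ G.Adj b z
      · simp only [hM', if_pos h] at hw'; exact Finset.erase_subset _ _ hw'
      · simpa only [hM', if_neg h] using hw'
    obtain ⟨φ'', hφ''1, hφ''2⟩ := surplus_color (B \ {a, b}) t htS hconnL M'
      (by
        intro z hz _
        rw [degB, nbrB_del2]
        have h3 := heq z hz.1
        have hz3 := hreg z hz.1
        rw [degB] at hz3
        by_cases h : G.Adj a z ∨ G.Adj b z
        · have hM'z : M' z = (M z).erase c := by simp only [hM', if_pos h]
          rw [hM'z]
          have h1 : (M z).card - 1 ≤ ((M z).erase c).card := by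
            rcases Finset.decidableMem c (M z) with h2 | h2
            · rw [Finset.erase_eq_of_notMem h2]; omega
            · rw [Finset.card_erase_of_mem h2]
          have hdd : degB G B z = (nbrB G B z).card := rfl
          have h2 : (((nbrB G B z).erase a).erase b).card ≤ (nbrB G B z).card - 1 := by
            rcases h with h | h
            · have ha' : a ∈ nbrB G B z := mem_nbrB.mpr ⟨haB, h.symm⟩
              calc (((nbrB G B z).erase a).erase b).card
                  ≤ ((nbrB G B z).erase a).card :=
                    Finset.card_le_card (Finset.erase_subset _ _)
                _ = (nbrB G B z).card - 1 := Finset.card_erase_of_mem ha'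
            · have hb' : b ∈ nbrB G B z := mem_nbrB.mpr ⟨hbB, h.symm⟩
              calc (((nbrB G B z).erase a).erase b).card
                  ≤ ((nbrB G B z).erase b).card := by
                    rw [Finset.erase_right_comm]
                    exact Finset.card_le_card (Finset.erase_subset _ _)
                _ = (nbrB G B z).card - 1 := Finset.card_erase_of_mem hb'
          omega
        · have hM'z : M' z = M z := by simp only [hM', if_neg h]
          rw [hM'z]
          have hdd : degB G B z = (nbrB G B z).card := rfl
          have h2 : (((nbrB G B z).erase a).erase b).card ≤ (nbrB G B z).card :=
            Finset.card_le_card ((Finset.erase_subset _ _).trans (Finset.erase_subset _ _))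
          omega)
      (by
        rw [degB, nbrB_del2]
        have hM't : M' t = (M t).erase c := by
          simp only [hM', if_pos (Or.inl hta.symm)]
        rw [hM't]
        have hct : c ∈ M t := by rw [hMall t htB]; exact hc
        rw [Finset.card_erase_of_mem hct]
        have h3 := heq t htB
        have hat : a ∈ nbrB G B t := mem_nbrB.mpr ⟨haB, hta⟩
        have hbt : b ∈ ((nbrB G B t).erase a) :=
          Finset.mem_erase.mpr ⟨Ne.symm hab, mem_nbrB.mpr ⟨hbB, htb⟩⟩
        have h4 : (((nbrB G B t).erase a).erase b).card = (nbrB G B t).card - 2 := by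
          rw [Finset.card_erase_of_mem hbt, Finset.card_erase_of_mem hat]
          omega
        have h5 := hreg t htB
        rw [degB] at h5
        have hdd : degB G B t = (nbrB G B t).card := rfl
        omega)
    refine ⟨fun z => if z = a ∨ z = b then c else φ'' z, ?_, ?_⟩
    · intro z hz
      show (if z = a ∨ z = b then c else φ'' z) ∈ M z
      by_cases h : z = a ∨ z = b
      · rw [if_pos h, show M z = M x from hMall z hz]; exact hc
      · rw [if_neg h]
        push_neg at h
        exact hM'le z (hφ''1 z ⟨hz, by simp [h.1, h.2]⟩)
    · intro z hz z' hz' hadj'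
      show (if z = a ∨ z = b then c else φ'' z) ≠ (if z' = a ∨ z' = b then c else φ'' z')
      by_cases h1 : z = a ∨ z = b <;> by_cases h2 : z' = a ∨ z' = b
      · exfalso
        rcases h1 with rfl | rfl <;> rcases h2 with h2 | h2
        · exact G.irrefl (h2 ▸ hadj')
        · exact hnadjab (h2 ▸ hadj')
        · exact hnadjab (h2 ▸ hadj'.symm)
        · exact G.irrefl (h2 ▸ hadj')
      · rw [if_pos h1, if_neg h2]
        push_neg at h2
        have hmem : φ'' z' ∈ M' z' := hφ''1 z' ⟨hz', by simp [h2.1, h2.2]⟩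
        have hadj2 : G.Adj a z' ∨ G.Adj b z' := by
          rcases h1 with rfl | rfl
          · exact Or.inl hadj'
          · exact Or.inr hadj'
        rw [show M' z' = (M z').erase c from by simp only [hM', if_pos hadj2]] at hmem
        exact fun he => (Finset.mem_erase.mp hmem).1 he.symm
      · rw [if_neg h1, if_pos h2]
        push_neg at h1
        have hmem : φ'' z ∈ M' z := hφ''1 z ⟨hz, by simp [h1.1, h1.2]⟩
        have hadj2 : G.Adj a z ∨ G.Adj b z := by
          rcases h2 with rfl | rfl
          · exact Or.inl hadj'.symm
          · exact Or.inr hadj'.symm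
        rw [show M' z = (M z).erase c from by simp only [hM', if_pos hadj2]] at hmem
        exact (Finset.mem_erase.mp hmem).1
      · rw [if_neg h1, if_neg h2]
        push_neg at h1
        push_neg at h2
        exact hφ''2 z ⟨hz, by simp [h1.1, h1.2]⟩ z' ⟨hz', by simp [h2.1, h2.2]⟩ hadj'


lemma outer_rank (hGconn : G.Connected) (B : Set V) (hBne : B.Nonempty) :
    ∃ f : V → ℕ, (∀ u v, f u = f v → u = v) ∧
      ∀ v, v ∉ B → ∃ u, G.Adj v u ∧ f v < f u := by
  classical
  set C := Fintype.card V with hC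
  have hCpos : 0 < C := Fintype.card_pos_iff.mpr ⟨hBne.choose⟩
  set emb : V → ℕ := fun v => ((Fintype.equivFin V) v).val with hemb
  have hembC : ∀ v, emb v < C := fun v => ((Fintype.equivFin V) v).2
  have himgne : ∀ v : V, (B.toFinset.image (fun b => G.dist v b)).Nonempty :=
    fun v => ⟨G.dist v hBne.choose,
      Finset.mem_image.mpr ⟨hBne.choose, Set.mem_toFinset.mpr hBne.choose_spec, rfl⟩⟩
  set d : V → ℕ := fun v => (B.toFinset.image (fun b => G.dist v b)).min' (himgne v) with hd
  have hdmem : ∀ v, ∃ b ∈ B, d v = G.dist v b := by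
    intro v
    have := Finset.min'_mem _ (himgne v)
    obtain ⟨b, hb, hbe⟩ := Finset.mem_image.mp this
    exact ⟨b, Set.mem_toFinset.mp hb, hbe.symm⟩
  have hdle : ∀ v, ∀ b ∈ B, d v ≤ G.dist v b := by
    intro v b hb
    exact Finset.min'_le _ _ (Finset.mem_image.mpr ⟨b, Set.mem_toFinset.mpr hb, rfl⟩)
  have hdC : ∀ v, d v < C := by
    intro v
    obtain ⟨b, hb, hbe⟩ := hdmem v
    rw [hbe]
    obtain ⟨p, hp, hlen⟩ := (hGconn.preconnected v b).exists_path_of_dist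
    rw [← hlen]
    exact hp.length_lt
  refine ⟨fun v => C * (C - d v) + emb v, ?_, ?_⟩
  · intro u v he'
    have he : C * (C - d u) + emb u = C * (C - d v) + emb v := he'
    have h1 : emb u = emb v := by
      have e1 : (C * (C - d u) + emb u) % C = emb u := by
        rw [Nat.mul_add_mod]; exact Nat.mod_eq_of_lt (hembC u)
      have e2 : (C * (C - d v) + emb v) % C = emb v := by
        rw [Nat.mul_add_mod]; exact Nat.mod_eq_of_lt (hembC v)
      rw [← e1, ← e2, he]
    exact (Fintype.equivFin V).injective (Fin.ext h1)
  · intro v hv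
    obtain ⟨b, hb, hbe⟩ := hdmem v
    have hvb : v ≠ b := fun h => hv (h ▸ hb)
    have hpos : 0 < d v := by
      rw [hbe]
      exact (hGconn.preconnected v b).pos_dist_of_ne hvb
    obtain ⟨p, hlen⟩ := (hGconn.preconnected v b).exists_walk_length_eq_dist
    cases p with
    | nil => rw [← hbe] at hlen; simp at hlen; omega
    | @cons _ u _ hadj q =>
      refine ⟨u, hadj, ?_⟩
      show C * (C - d v) + emb v < C * (C - d u) + emb u
      have hdu : d u ≤ d v - 1 := by
        have h2 : d u ≤ G.dist u b := hdle u b hb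
        have h3 : G.dist u b ≤ q.length := SimpleGraph.dist_le q
        have h4 : q.length = d v - 1 := by
          rw [hbe]; simp [SimpleGraph.Walk.length_cons] at hlen; omega
        omega
      have hdvC : d v < C := hdC v
      calc C * (C - d v) + emb v < C * (C - d v) + C := by
            exact Nat.add_lt_add_left (hembC v) _
        _ = C * (C - d v + 1) := by ring
        _ ≤ C * (C - d u) := Nat.mul_le_mul_left C (by omega)
        _ ≤ C * (C - d u) + emb u := Nat.le_add_right _ _


end BERT

/-- Borodin–Erdős–Rubin–Taylor: if a connected graph G with degree-assignment
L is not L-colorable, then every block of G is a complete graph or an odd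
cycle (G is a Gallai tree). -/
theorem stmt_10 {V : Type*} [Fintype V] [DecidableEq V] (G : SimpleGraph V)
    [DecidableRel G.Adj] (hconn : G.Connected) (L : V → Finset ℕ)
    (hdeg : ∀ v, G.degree v ≤ (L v).card)
    (hnocol : ¬ ∃ φ : V → ℕ, (∀ v, φ v ∈ L v) ∧ ∀ u v, G.Adj u v → φ u ≠ φ v) :
    ∀ B : Set V, IsBlock G B →
      (∀ a ∈ B, ∀ b ∈ B, a ≠ b → G.Adj a b) ∨
      ∃ n : ℕ, Odd n ∧ 3 ≤ n ∧
        Nonempty ((G.induce B) ≃g SimpleGraph.cycleGraph n) := by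
  intro B hB
  by_contra hcon
  rw [not_or] at hcon
  obtain ⟨hncomp', hno⟩ := hcon
  push_neg at hncomp'
  obtain ⟨hns1, hns2⟩ := hB.1
  have hBne : B.Nonempty := by
    obtain ⟨⟨u, hu⟩⟩ := hns1.nonempty
    exact ⟨u, hu⟩
  -- stage 1 : greedy colouring of the complement of B
  obtain ⟨f, hfinj, hfstep⟩ := BERT.outer_rank hconn B hBne
  set A : Finset V := Finset.univ.filter (fun v => v ∉ B) with hA
  have hmemA : ∀ v, v ∈ A ↔ v ∉ B := by intro v; simp [hA]
  obtain ⟨φ₀, hφ₀1, hφ₀2⟩ := BERT.greedy (G := G) A L f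
    (fun u _ v _ he => hfinj u v he)
    (by
      intro v hv
      obtain ⟨u, hu1, hu2⟩ := hfstep v ((hmemA v).mp hv)
      have hsub : A.filter (fun u => G.Adj u v ∧ f u < f v) ⊆
          (G.neighborFinset v).erase u := by
        intro z hz
        simp only [Finset.mem_filter] at hz
        refine Finset.mem_erase.mpr ⟨?_, (G.mem_neighborFinset v z).mpr hz.2.1.symm⟩
        intro he; rw [he] at hz; omega
      have humem : u ∈ G.neighborFinset v := (G.mem_neighborFinset v u).mpr hu1
      have h5 : ((G.neighborFinset v).erase u).card < G.degree v := by
        rw [SimpleGraph.degree]; exact Finset.card_erase_lt_of_mem humem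
      exact lt_of_le_of_lt (Finset.card_le_card hsub) (lt_of_lt_of_le h5 (hdeg v)))
  -- stage 2 : lists for B
  set M : V → Finset ℕ := fun u =>
    (L u) \ (((G.neighborFinset u).filter (fun z => z ∉ B)).image φ₀) with hM
  have hMcard : ∀ u ∈ B, BERT.degB G B u ≤ (M u).card := by
    intro u hu
    have h1 : (L u).card - (((G.neighborFinset u).filter (fun z => z ∉ B)).image φ₀).card
        ≤ (M u).card := Finset.le_card_sdiff _ _
    have h2 : (((G.neighborFinset u).filter (fun z => z ∉ B)).image φ₀).card ≤
        ((G.neighborFinset u).filter (fun z => z ∉ B)).card := Finset.card_image_le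
    have h3 : BERT.nbrB G B u = (G.neighborFinset u).filter (fun z => z ∈ B) := by
      ext z
      simp [BERT.mem_nbrB, SimpleGraph.mem_neighborFinset]
      tauto
    have h4 : ((G.neighborFinset u).filter (fun z => z ∈ B)).card +
        ((G.neighborFinset u).filter (fun z => z ∉ B)).card = G.degree u := by
      rw [SimpleGraph.degree]
      exact Finset.card_filter_add_card_filter_not _
    have h5 := hdeg u
    have h6 : BERT.degB G B u = (BERT.nbrB G B u).card := rfl
    rw [h6, h3]
    omega
  -- core colouring of B
  obtain ⟨ψ, hψ1, hψ2⟩ := BERT.core hns1 hns2 hncomp' hno M hMcard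
  -- combine
  apply hnocol
  refine ⟨fun v => if v ∈ B then ψ v else φ₀ v, ?_, ?_⟩
  · intro v
    show (if v ∈ B then ψ v else φ₀ v) ∈ L v
    by_cases h : v ∈ B
    · rw [if_pos h]
      exact Finset.sdiff_subset (hψ1 v h)
    · rw [if_neg h]
      exact hφ₀1 v ((hmemA v).mpr h)
  · intro u v hadj
    show (if u ∈ B then ψ u else φ₀ u) ≠ (if v ∈ B then ψ v else φ₀ v)
    by_cases h1 : u ∈ B <;> by_cases h2 : v ∈ B
    · rw [if_pos h1, if_pos h2]
      exact hψ2 u h1 v h2 hadj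
    · rw [if_pos h1, if_neg h2]
      have hmem : ψ u ∈ M u := hψ1 u h1
      rw [hM] at hmem
      have : φ₀ v ∈ ((G.neighborFinset u).filter (fun z => z ∉ B)).image φ₀ :=
        Finset.mem_image.mpr ⟨v, Finset.mem_filter.mpr
          ⟨(G.mem_neighborFinset u v).mpr hadj, h2⟩, rfl⟩
      intro he
      exact (Finset.mem_sdiff.mp hmem).2 (he ▸ this)
    · rw [if_neg h1, if_pos h2]
      have hmem : ψ v ∈ M v := hψ1 v h2
      rw [hM] at hmem
      have : φ₀ u ∈ ((G.neighborFinset v).filter (fun z => z ∉ B)).image φ₀ :=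
        Finset.mem_image.mpr ⟨u, Finset.mem_filter.mpr
          ⟨(G.mem_neighborFinset v u).mpr hadj.symm, h1⟩, rfl⟩
      intro he
      exact (Finset.mem_sdiff.mp hmem).2 (he ▸ this)
    · rw [if_neg h1, if_neg h2]
      exact hφ₀2 u ((hmemA u).mpr h1) v ((hmemA v).mpr h2) hadj
end
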